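/- arXiv:2009.07802 — 2 statements merged into one kernel-verified Lean document; each statement's English description precedes it below -/
import Mathlib

section
/- Let g be a flat metric on a connected open set U ⊆ ℝⁿ (n ≥ 2) and let L₁, L₂ be smooth fields of endomorphisms geodesically compatible with g and non-degenerate, such that gL₁⁻¹ has constant curvature K₁ and gL₂⁻¹ has constant curvature K₂. Then for all α, β ∈ ℝ such that the operator αL₁ + βL₂ is invertible at every point of U, the metric g(αL₁ + βL₂)⁻¹ has constant curvature αK₁ + βK₂. -/
open scoped BigOperators

/-- Partial derivative `∂_k f` at `x`. -/
noncomputable def pd {n : ℕ} (f : (Fin n → ℝ) → ℝ) (k : Fin n) (x : Fin n → ℝ) : ℝ :=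
  fderiv ℝ f x (Pi.single k 1)

/-- Christoffel symbols `Γ^i_{jk}` of a metric `g`. -/
noncomputable def Christoffel {n : ℕ} (g : (Fin n → ℝ) → Matrix (Fin n) (Fin n) ℝ)
    (i j k : Fin n) (x : Fin n → ℝ) : ℝ :=
  (1 / 2) * ∑ s, (g x)⁻¹ i s *
    (pd (fun y => g y s k) j x + pd (fun y => g y s j) k x - pd (fun y => g y j k) s x)

/-- Curvature tensor `R^l_{ijk}` of a metric `g`. -/
noncomputable def Curv {n : ℕ} (g : (Fin n → ℝ) → Matrix (Fin n) (Fin n) ℝ)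
    (l i j k : Fin n) (x : Fin n → ℝ) : ℝ :=
  pd (Christoffel g l i k) j x - pd (Christoffel g l i j) k x
    + ∑ s, (Christoffel g l j s x * Christoffel g s i k x
        - Christoffel g l k s x * Christoffel g s i j x)

/-- `g` is a (smooth pseudo-Riemannian) metric on `U`. -/
def IsMetricOn {n : ℕ} (g : (Fin n → ℝ) → Matrix (Fin n) (Fin n) ℝ)
    (U : Set (Fin n → ℝ)) : Prop :=
  (∀ i j, ContDiffOn ℝ (⊤ : ℕ∞) (fun x => g x i j) U) ∧
    (∀ x ∈ U, (g x).IsSymm) ∧ ∀ x ∈ U, (g x).det ≠ 0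

/-- The metric `g` is flat on `U`. -/
def IsFlatOn {n : ℕ} (g : (Fin n → ℝ) → Matrix (Fin n) (Fin n) ℝ)
    (U : Set (Fin n → ℝ)) : Prop :=
  ∀ x ∈ U, ∀ l i j k : Fin n, Curv g l i j k x = 0

/-- The metric `g` has constant curvature `K` on `U`:
`g^{js} R^i_{skm} = K (δ^i_k δ^j_m − δ^i_m δ^j_k)`. -/
def HasConstCurvOn {n : ℕ} (g : (Fin n → ℝ) → Matrix (Fin n) (Fin n) ℝ)
    (U : Set (Fin n → ℝ)) (K : ℝ) : Prop :=
  ∀ x ∈ U, ∀ i j k m : Fin n,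
    (∑ s, (g x)⁻¹ j s * Curv g i s k m x)
      = K * ((if i = k then (1:ℝ) else 0) * (if j = m then (1:ℝ) else 0)
          - (if i = m then (1:ℝ) else 0) * (if j = k then (1:ℝ) else 0))

/-- `λ = ½ tr L`. -/
noncomputable def lamL {n : ℕ} (L : (Fin n → ℝ) → Matrix (Fin n) (Fin n) ℝ)
    (x : Fin n → ℝ) : ℝ :=
  (1 / 2) * ∑ i, L x i i

/-- `L_{ij} = L^s_i g_{sj}`. -/
noncomputable def lowL {n : ℕ} (g L : (Fin n → ℝ) → Matrix (Fin n) (Fin n) ℝ)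
    (x : Fin n → ℝ) (i j : Fin n) : ℝ :=
  ∑ s, L x s i * g x s j

/-- `∇_k L_{ij} = ∂_k L_{ij} − Γ^s_{ki} L_{sj} − Γ^s_{kj} L_{is}`. -/
noncomputable def covL {n : ℕ} (g L : (Fin n → ℝ) → Matrix (Fin n) (Fin n) ℝ)
    (k i j : Fin n) (x : Fin n → ℝ) : ℝ :=
  pd (fun y => lowL g L y i j) k x
    - ∑ s, Christoffel g s k i x * lowL g L x s j
    - ∑ s, Christoffel g s k j x * lowL g L x i s

/-- `L` is geodesically compatible with `g` on `U`: it is smooth, `L_{ij}` is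
symmetric, and `∇_k L_{ij} = λ_i g_{jk} + λ_j g_{ik}` with `λ = ½ tr L`. -/
def GeodCompatOn {n : ℕ} (g L : (Fin n → ℝ) → Matrix (Fin n) (Fin n) ℝ)
    (U : Set (Fin n → ℝ)) : Prop :=
  (∀ i j, ContDiffOn ℝ (⊤ : ℕ∞) (fun x => L x i j) U) ∧
    (∀ x ∈ U, ∀ i j, lowL g L x i j = lowL g L x j i) ∧
    ∀ x ∈ U, ∀ k i j, covL g L k i j x
      = pd (lamL L) i x * g x j k + pd (lamL L) j x * g x i k

/-- `h` is a Casimir of the constant-curvature (curvature `K`) metric `g`: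
`g^{is} (∂_s ∂_j h − Γ^r_{sj} ∂_r h) + K h δ^i_j = 0`. -/
def IsCasimirOn {n : ℕ} (g : (Fin n → ℝ) → Matrix (Fin n) (Fin n) ℝ) (K : ℝ)
    (U : Set (Fin n → ℝ)) (h : (Fin n → ℝ) → ℝ) : Prop :=
  ContDiffOn ℝ (⊤ : ℕ∞) h U ∧
    ∀ x ∈ U, ∀ i j : Fin n,
      (∑ s, (g x)⁻¹ i s * (pd (pd h j) s x - ∑ r, Christoffel g r s j x * pd h r x))
        + K * h x * (if i = j then (1:ℝ) else 0) = 0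

open scoped Matrix

section Toolkit


variable {n : ℕ} {U : Set (Fin n → ℝ)} {f h : (Fin n → ℝ) → ℝ} {x : Fin n → ℝ} {k : Fin n}

/-- Kronecker delta -/
def kron {n : ℕ} (i j : Fin n) : ℝ := if i = j then 1 else 0

abbrev Sm {n : ℕ} (U : Set (Fin n → ℝ)) (f : (Fin n → ℝ) → ℝ) : Prop :=
  ContDiffOn ℝ (⊤ : ℕ∞) f U

theorem sm_dAt (hf : Sm U f) (hUo : IsOpen U) (hx : x ∈ U) : DifferentiableAt ℝ f x :=
  (hf.differentiableOn (by simp)).differentiableAt (hUo.mem_nhds hx)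

theorem pd_congr (hUo : IsOpen U) (hx : x ∈ U) (hfh : ∀ y ∈ U, f y = h y) :
    pd f k x = pd h k x := by
  unfold pd
  have : f =ᶠ[nhds x] h := by
    filter_upwards [hUo.mem_nhds hx] using hfh
  rw [this.fderiv_eq]

theorem pd_add (hf : DifferentiableAt ℝ f x) (hh : DifferentiableAt ℝ h x) :
    pd (fun y => f y + h y) k x = pd f k x + pd h k x := by
  unfold pd; rw [fderiv_fun_add hf hh]; rfl

theorem pd_sub (hf : DifferentiableAt ℝ f x) (hh : DifferentiableAt ℝ h x) :
    pd (fun y => f y - h y) k x = pd f k x - pd h k x := by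
  unfold pd; rw [fderiv_fun_sub hf hh]; rfl

theorem pd_neg : pd (fun y => -f y) k x = - pd f k x := by
  unfold pd; rw [fderiv_fun_neg]; rfl

theorem pd_const (c : ℝ) : pd (fun _ => c) k x = 0 := by
  unfold pd; rw [fderiv_fun_const]; rfl

theorem pd_mul (hf : DifferentiableAt ℝ f x) (hh : DifferentiableAt ℝ h x) :
    pd (fun y => f y * h y) k x = f x * pd h k x + h x * pd f k x := by
  unfold pd; rw [fderiv_fun_mul hf hh]; rfl

theorem pd_const_mul (c : ℝ) (hf : DifferentiableAt ℝ f x) :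
    pd (fun y => c * f y) k x = c * pd f k x := by
  unfold pd; rw [fderiv_const_mul hf]; rfl

theorem pd_sum {ι : Type*} (s : Finset ι) (F : ι → (Fin n → ℝ) → ℝ)
    (hF : ∀ i ∈ s, DifferentiableAt ℝ (F i) x) :
    pd (fun y => ∑ i ∈ s, F i y) k x = ∑ i ∈ s, pd (F i) k x := by
  unfold pd; rw [fderiv_fun_sum hF]; simp

theorem sm_pd (hUo : IsOpen U) (hf : Sm U f) (k : Fin n) : Sm U (pd f k) := by
  have h1 : ContDiffOn ℝ (⊤ : ℕ∞) (fderiv ℝ f) U := hf.fderiv_of_isOpen hUo (by simp)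
  exact h1.clm_apply contDiffOn_const

theorem sm_finprod {ι : Type*} {s : Finset ι} {F : ι → (Fin n → ℝ) → ℝ}
    (hF : ∀ i ∈ s, Sm U (F i)) : Sm U fun y => ∏ i ∈ s, F i y := by
  classical
  revert hF
  refine Finset.induction_on s (fun _ => by simpa using (contDiffOn_const (c := (1:ℝ)))) ?_
  intro a t ha ih hF
  simp only [Finset.prod_insert ha]
  exact (hF a (Finset.mem_insert_self a t)).mul (ih fun i hi => hF i (Finset.mem_insert_of_mem hi))

end Toolkit
section MatrixTools

variable {n : ℕ} {U : Set (Fin n → ℝ)} {x : Fin n → ℝ} {k : Fin n}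
variable {A : (Fin n → ℝ) → Matrix (Fin n) (Fin n) ℝ}

theorem sm_det (hA : ∀ i j, Sm U fun y => A y i j) : Sm U fun y => (A y).det := by
  have : (fun y => (A y).det)
      = fun y => ∑ σ : Equiv.Perm (Fin n), ((Equiv.Perm.sign σ : ℤ) : ℝ) * ∏ i, A y (σ i) i := by
    funext y
    rw [Matrix.det_apply]
    congr 1; funext σ
    simp [Units.smul_def, zsmul_eq_mul]
  rw [this]
  exact ContDiffOn.sum fun σ _ => contDiffOn_const.mul (sm_finprod fun i _ => hA _ _)

theorem sm_inv_entry (hA : ∀ i j, Sm U fun y => A y i j)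
    (hdet : ∀ y ∈ U, (A y).det ≠ 0) (i j : Fin n) : Sm U fun y => (A y)⁻¹ i j := by
  have hadj : Sm U fun y => (A y).adjugate i j := by
    have : (fun y => (A y).adjugate i j)
        = fun y => ((A y).updateRow j (Pi.single i 1)).det := by
      funext y; rw [Matrix.adjugate_apply]
    rw [this]
    apply sm_det
    intro a b
    by_cases haj : a = j
    · subst haj
      simpa [Matrix.updateRow_self] using (contDiffOn_const (c := (Pi.single i (1:ℝ) : Fin n → ℝ) b))
    · simpa [Matrix.updateRow_ne haj] using hA a b
  have : (fun y => (A y)⁻¹ i j) = fun y => ((A y).det)⁻¹ * (A y).adjugate i j := by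
    funext y
    rw [Matrix.inv_def]
    simp [Ring.inverse_eq_inv', Matrix.smul_apply, smul_eq_mul]
  rw [this]
  exact ((sm_det hA).inv hdet).mul hadj

theorem inv_mul_entry (hdet : (A x).det ≠ 0) (i j : Fin n) :
    ∑ s, (A x)⁻¹ i s * A x s j = kron i j := by
  have h := Matrix.nonsing_inv_mul (A x) (isUnit_iff_ne_zero.2 hdet)
  have := congrFun (congrFun h i) j
  simpa [Matrix.mul_apply, Matrix.one_apply, kron] using this

theorem mul_inv_entry (hdet : (A x).det ≠ 0) (i j : Fin n) :
    ∑ s, A x i s * (A x)⁻¹ s j = kron i j := by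
  have h := Matrix.mul_nonsing_inv (A x) (isUnit_iff_ne_zero.2 hdet)
  have := congrFun (congrFun h i) j
  simpa [Matrix.mul_apply, Matrix.one_apply, kron] using this

theorem kron_sum_left (f : Fin n → ℝ) (i : Fin n) : ∑ s, kron i s * f s = f i := by
  simp [kron]

theorem kron_sum_right (f : Fin n → ℝ) (i : Fin n) : ∑ s, f s * kron s i = f i := by
  simp [kron]

/-- derivative of the entries of the inverse matrix -/
theorem pd_inv_entry (hUo : IsOpen U) (hA : ∀ i j, Sm U fun y => A y i j)
    (hdet : ∀ y ∈ U, (A y).det ≠ 0) (hx : x ∈ U) (a b : Fin n) :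
    pd (fun y => (A y)⁻¹ a b) k x
      = -∑ p, ∑ q, (A x)⁻¹ a p * pd (fun y => A y p q) k x * (A x)⁻¹ q b := by
  have hinv : ∀ i j, Sm U fun y => (A y)⁻¹ i j := sm_inv_entry hA hdet
  have hd1 : ∀ i j : Fin n, DifferentiableAt ℝ (fun y => (A y)⁻¹ i j) x :=
    fun i j => sm_dAt (hinv i j) hUo hx
  have hd2 : ∀ i j : Fin n, DifferentiableAt ℝ (fun y => A y i j) x :=
    fun i j => sm_dAt (hA i j) hUo hx
  have key : ∀ q : Fin n,
      ∑ c, pd (fun y => (A y)⁻¹ a c) k x * A x c q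
        = -∑ c, (A x)⁻¹ a c * pd (fun y => A y c q) k x := by
    intro q
    have h1 : pd (fun y => ∑ c, (A y)⁻¹ a c * A y c q) k x = 0 := by
      rw [pd_congr hUo hx (h := fun _ => kron a q) (fun y hy => inv_mul_entry (hdet y hy) a q)]
      exact pd_const _
    rw [pd_sum _ _ (fun c _ => (hd1 a c).fun_mul (hd2 c q))] at h1
    have h2 : ∑ c, (pd (fun y => (A y)⁻¹ a c) k x * A x c q
        + (A x)⁻¹ a c * pd (fun y => A y c q) k x) = 0 := by
      rw [← h1]
      exact Finset.sum_congr rfl fun c _ => by rw [pd_mul (hd1 a c) (hd2 c q)]; ring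
    rw [Finset.sum_add_distrib] at h2
    linarith
  calc pd (fun y => (A y)⁻¹ a b) k x
      = ∑ c, pd (fun y => (A y)⁻¹ a c) k x * kron c b :=
        (kron_sum_right (fun c => pd (fun y => (A y)⁻¹ a c) k x) b).symm
    _ = ∑ c, pd (fun y => (A y)⁻¹ a c) k x * ∑ q, A x c q * (A x)⁻¹ q b := by
        exact Finset.sum_congr rfl fun c _ => by rw [mul_inv_entry (hdet x hx)]
    _ = ∑ q, (∑ c, pd (fun y => (A y)⁻¹ a c) k x * A x c q) * (A x)⁻¹ q b := by
        simp_rw [Finset.mul_sum, Finset.sum_mul]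
        rw [Finset.sum_comm]
        exact Finset.sum_congr rfl fun q _ => Finset.sum_congr rfl fun c _ => by ring
    _ = ∑ q, (-∑ p, (A x)⁻¹ a p * pd (fun y => A y p q) k x) * (A x)⁻¹ q b := by
        exact Finset.sum_congr rfl fun q _ => by rw [key q]
    _ = -∑ p, ∑ q, (A x)⁻¹ a p * pd (fun y => A y p q) k x * (A x)⁻¹ q b := by
        simp_rw [neg_mul, Finset.sum_mul]
        rw [Finset.sum_neg_distrib]
        exact congrArg Neg.neg Finset.sum_comm

end MatrixTools
section Geometry

variable {n : ℕ} {U : Set (Fin n → ℝ)} {x : Fin n → ℝ}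

/-- the matrix `M = (L_{ij})` of the lowered operator -/
noncomputable def Mm (g L : (Fin n → ℝ) → Matrix (Fin n) (Fin n) ℝ) (x : Fin n → ℝ) :
    Matrix (Fin n) (Fin n) ℝ := Matrix.of fun i j => lowL g L x i j

/-- `λ^i = g^{is} λ_s` -/
noncomputable def lamup (g L : (Fin n → ℝ) → Matrix (Fin n) (Fin n) ℝ) (i : Fin n)
    (x : Fin n → ℝ) : ℝ := ∑ s, (g x)⁻¹ i s * pd (lamL L) s x

/-- `λ̂_i = ĝ_{is} λ^s` -/
noncomputable def lamhat (g L : (Fin n → ℝ) → Matrix (Fin n) (Fin n) ℝ) (i : Fin n)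
    (x : Fin n → ℝ) : ℝ := ∑ s, (g x * (L x)⁻¹) i s * lamup g L s x

/-- `∇_m λ^i` -/
noncomputable def Nab (g L : (Fin n → ℝ) → Matrix (Fin n) (Fin n) ℝ) (i m : Fin n)
    (x : Fin n → ℝ) : ℝ :=
  pd (lamup g L i) m x + ∑ s, Christoffel g i m s x * lamup g L s x

variable {g L : (Fin n → ℝ) → Matrix (Fin n) (Fin n) ℝ}

theorem g_symm (hg : IsMetricOn g U) (hx : x ∈ U) (i j : Fin n) : g x i j = g x j i := by
  have h := (hg.2.1 x hx)
  rw [Matrix.IsSymm] at h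
  conv_rhs => rw [← h]
  rfl

theorem sm_ginv (hg : IsMetricOn g U) (i j : Fin n) : Sm U fun y => (g y)⁻¹ i j :=
  sm_inv_entry hg.1 hg.2.2 i j

theorem sm_lam (hgeo : GeodCompatOn g L U) : Sm U (lamL L) := by
  show Sm U fun y => (1/2 : ℝ) * ∑ i, L y i i
  exact contDiffOn_const.mul (ContDiffOn.sum fun i _ => hgeo.1 i i)

theorem sm_Linv (hgeo : GeodCompatOn g L U) (hnd : ∀ x ∈ U, (L x).det ≠ 0) (i j : Fin n) :
    Sm U fun y => (L y)⁻¹ i j :=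
  sm_inv_entry hgeo.1 hnd i j

theorem sm_M (hg : IsMetricOn g U) (hgeo : GeodCompatOn g L U) (i j : Fin n) :
    Sm U fun y => Mm g L y i j := by
  show Sm U fun y => ∑ s, L y s i * g y s j
  exact ContDiffOn.sum fun s _ => (hgeo.1 s i).mul (hg.1 s j)

theorem M_eq_transpose_mul : Mm g L x = (L x)ᵀ * g x := by
  ext i j
  simp [Mm, lowL, Matrix.mul_apply, Matrix.transpose_apply]

theorem det_M_ne (hg : IsMetricOn g U) (hnd : ∀ x ∈ U, (L x).det ≠ 0) (hx : x ∈ U) :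
    (Mm g L x).det ≠ 0 := by
  have h : (Mm g L x).det = (L x).det * (g x).det := by
    rw [M_eq_transpose_mul, Matrix.det_mul, Matrix.det_transpose]
  rw [h]
  exact mul_ne_zero (hnd x hx) (hg.2.2 x hx)

theorem sm_Minv (hg : IsMetricOn g U) (hgeo : GeodCompatOn g L U)
    (hnd : ∀ x ∈ U, (L x).det ≠ 0) (i j : Fin n) : Sm U fun y => (Mm g L y)⁻¹ i j :=
  sm_inv_entry (sm_M hg hgeo) (fun y hy => det_M_ne hg hnd hy) i j

theorem det_gh_ne (hg : IsMetricOn g U) (hnd : ∀ x ∈ U, (L x).det ≠ 0) (hx : x ∈ U) :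
    (g x * (L x)⁻¹).det ≠ 0 := by
  rw [Matrix.det_mul, Matrix.det_nonsing_inv, Ring.inverse_eq_inv']
  exact mul_ne_zero (hg.2.2 x hx) (inv_ne_zero (hnd x hx))

theorem M_symm (hg : IsMetricOn g U) (hgeo : GeodCompatOn g L U) (hx : x ∈ U) :
    (Mm g L x)ᵀ = Mm g L x := by
  ext i j
  show Mm g L x j i = Mm g L x i j
  exact (hgeo.2.1 x hx i j).symm

theorem gL_eq_M (hg : IsMetricOn g U) (hgeo : GeodCompatOn g L U) (hx : x ∈ U) :
    g x * L x = Mm g L x := by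
  have h1 : (g x * L x)ᵀ = Mm g L x := by
    rw [Matrix.transpose_mul, (hg.2.1 x hx), ← M_eq_transpose_mul]
  calc g x * L x = ((g x * L x)ᵀ)ᵀ := by rw [Matrix.transpose_transpose]
    _ = (Mm g L x)ᵀ := by rw [h1]
    _ = Mm g L x := M_symm hg hgeo hx

theorem L_eq (hg : IsMetricOn g U) (hgeo : GeodCompatOn g L U) (hx : x ∈ U) :
    L x = (g x)⁻¹ * Mm g L x := by
  rw [← gL_eq_M hg hgeo hx, Matrix.nonsing_inv_mul_cancel_left _ _
    (isUnit_iff_ne_zero.2 (hg.2.2 x hx))]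

theorem Linv_eq (hg : IsMetricOn g U) (hgeo : GeodCompatOn g L U) (hx : x ∈ U) :
    (L x)⁻¹ = (Mm g L x)⁻¹ * g x := by
  rw [L_eq hg hgeo hx, Matrix.mul_inv_rev,
    Matrix.nonsing_inv_nonsing_inv _ (isUnit_iff_ne_zero.2 (hg.2.2 x hx))]

theorem gh_eq (hg : IsMetricOn g U) (hgeo : GeodCompatOn g L U) (hx : x ∈ U) :
    g x * (L x)⁻¹ = g x * (Mm g L x)⁻¹ * g x := by
  rw [Linv_eq hg hgeo hx, Matrix.mul_assoc]

theorem ghinv_eq (hg : IsMetricOn g U) (hgeo : GeodCompatOn g L U)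
    (hnd : ∀ x ∈ U, (L x).det ≠ 0) (hx : x ∈ U) :
    (g x * (L x)⁻¹)⁻¹ = (g x)⁻¹ * Mm g L x * (g x)⁻¹ := by
  rw [gh_eq hg hgeo hx, Matrix.mul_inv_rev, Matrix.mul_inv_rev,
    Matrix.nonsing_inv_nonsing_inv _ (isUnit_iff_ne_zero.2 (det_M_ne hg hnd hx)),
    Matrix.mul_assoc]

theorem ginv_symm (hg : IsMetricOn g U) (hx : x ∈ U) :
    Matrix.transpose ((g x)⁻¹) = (g x)⁻¹ := by
  rw [Matrix.transpose_nonsing_inv, (hg.2.1 x hx)]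

theorem Minv_symm (hg : IsMetricOn g U) (hgeo : GeodCompatOn g L U) (hx : x ∈ U) :
    Matrix.transpose ((Mm g L x)⁻¹) = (Mm g L x)⁻¹ := by
  rw [Matrix.transpose_nonsing_inv, M_symm hg hgeo hx]

theorem gh_symm (hg : IsMetricOn g U) (hgeo : GeodCompatOn g L U) (hx : x ∈ U) :
    Matrix.transpose (g x * (L x)⁻¹) = g x * (L x)⁻¹ := by
  rw [gh_eq hg hgeo hx]
  rw [Matrix.transpose_mul, Matrix.transpose_mul, Minv_symm hg hgeo hx, (hg.2.1 x hx),
    Matrix.mul_assoc]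

theorem gh_symm_entry (hg : IsMetricOn g U) (hgeo : GeodCompatOn g L U) (hx : x ∈ U)
    (i j : Fin n) : (g x * (L x)⁻¹) i j = (g x * (L x)⁻¹) j i := by
  conv_lhs => rw [← gh_symm hg hgeo hx]
  rfl

theorem sm_gh (hg : IsMetricOn g U) (hgeo : GeodCompatOn g L U)
    (hnd : ∀ x ∈ U, (L x).det ≠ 0) (i j : Fin n) : Sm U fun y => (g y * (L y)⁻¹) i j := by
  show Sm U fun y => ∑ s, g y i s * (L y)⁻¹ s j
  exact ContDiffOn.sum fun s _ => (hg.1 i s).mul (sm_Linv hgeo hnd s j)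

theorem sm_lamup (hUo : IsOpen U) (hg : IsMetricOn g U) (hgeo : GeodCompatOn g L U)
    (i : Fin n) : Sm U (lamup g L i) := by
  show Sm U fun y => ∑ s, (g y)⁻¹ i s * pd (lamL L) s y
  exact ContDiffOn.sum fun s _ => (sm_ginv hg i s).mul (sm_pd hUo (sm_lam hgeo) s)

theorem sm_Gamma (hUo : IsOpen U) (hg : IsMetricOn g U) (i j k : Fin n) :
    Sm U fun y => Christoffel g i j k y := by
  show Sm U fun y => (1/2 : ℝ) * ∑ s, (g y)⁻¹ i s *
    (pd (fun z => g z s k) j y + pd (fun z => g z s j) k y - pd (fun z => g z j k) s y)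
  exact contDiffOn_const.mul (ContDiffOn.sum fun s _ => (sm_ginv hg i s).mul
    (((sm_pd hUo (hg.1 s k) j).add (sm_pd hUo (hg.1 s j) k)).sub (sm_pd hUo (hg.1 j k) s)))

theorem sm_lamhat (hUo : IsOpen U) (hg : IsMetricOn g U) (hgeo : GeodCompatOn g L U)
    (hnd : ∀ x ∈ U, (L x).det ≠ 0) (i : Fin n) : Sm U (lamhat g L i) := by
  show Sm U fun y => ∑ s, (g y * (L y)⁻¹) i s * lamup g L s y
  exact ContDiffOn.sum fun s _ => (sm_gh hg hgeo hnd i s).mul (sm_lamup hUo hg hgeo s)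

end Geometry
section Derivatives

variable {n : ℕ} {U : Set (Fin n → ℝ)} {x : Fin n → ℝ}
variable {g L : (Fin n → ℝ) → Matrix (Fin n) (Fin n) ℝ}

theorem mul3_apply (A B C : Matrix (Fin n) (Fin n) ℝ) (i j : Fin n) :
    (A * B * C) i j = ∑ p, ∑ q, A i p * B p q * C q j := by
  rw [Matrix.mul_apply]
  rw [Finset.sum_comm]
  apply Finset.sum_congr rfl
  intro q _
  rw [Matrix.mul_apply, Finset.sum_mul]

theorem mul_vecMulVec (A : Matrix (Fin n) (Fin n) ℝ) (u v : Fin n → ℝ) :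
    A * Matrix.vecMulVec u v = Matrix.vecMulVec (A.mulVec u) v := by
  ext i j
  simp [Matrix.mul_apply, Matrix.vecMulVec_apply, Matrix.mulVec, dotProduct,
    Finset.sum_mul, mul_assoc]

theorem vecMulVec_mul (u v : Fin n → ℝ) (B : Matrix (Fin n) (Fin n) ℝ) :
    Matrix.vecMulVec u v * B = Matrix.vecMulVec u (Matrix.vecMul v B) := by
  ext i j
  simp [Matrix.mul_apply, Matrix.vecMulVec_apply, Matrix.vecMul, dotProduct,
    Finset.mul_sum, mul_assoc]

theorem pd_mul3 {f₁ f₂ f₃ : (Fin n → ℝ) → ℝ} {k : Fin n}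
    (h1 : DifferentiableAt ℝ f₁ x) (h2 : DifferentiableAt ℝ f₂ x)
    (h3 : DifferentiableAt ℝ f₃ x) :
    pd (fun y => f₁ y * f₂ y * f₃ y) k x
      = pd f₁ k x * f₂ x * f₃ x + f₁ x * pd f₂ k x * f₃ x + f₁ x * f₂ x * pd f₃ k x := by
  rw [pd_mul (h1.fun_mul h2) h3, pd_mul h1 h2]; ring

/-- symmetry of the Christoffel symbols -/
theorem Gamma_symm (hUo : IsOpen U) (hg : IsMetricOn g U) (hx : x ∈ U) (i j k : Fin n) :
    Christoffel g i j k x = Christoffel g i k j x := by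
  unfold Christoffel
  congr 1
  apply Finset.sum_congr rfl
  intro s _
  congr 1
  have e1 : pd (fun y => g y j k) s x = pd (fun y => g y k j) s x :=
    pd_congr hUo hx fun y hy => g_symm hg hy j k
  rw [e1]; ring

/-- lowered Christoffel symbols -/
theorem Gamma_low (hg : IsMetricOn g U) (hx : x ∈ U) (a k b : Fin n) :
    ∑ s, g x a s * Christoffel g s k b x
      = (1/2) * (pd (fun y => g y a b) k x + pd (fun y => g y a k) b x
          - pd (fun y => g y k b) a x) := by
  unfold Christoffel
  have e1 : ∀ s : Fin n, g x a s * ((1/2 : ℝ) * ∑ t, (g x)⁻¹ s t *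
      (pd (fun y => g y t b) k x + pd (fun y => g y t k) b x - pd (fun y => g y k b) t x))
      = (1/2 : ℝ) * ∑ t, g x a s * (g x)⁻¹ s t *
      (pd (fun y => g y t b) k x + pd (fun y => g y t k) b x - pd (fun y => g y k b) t x) := by
    intro s
    simp only [Finset.mul_sum]
    apply Finset.sum_congr rfl
    intro t _
    ring
  rw [Finset.sum_congr rfl fun s _ => e1 s, ← Finset.mul_sum]
  congr 1
  rw [Finset.sum_comm]
  have e2 : ∀ t : Fin n, ∑ s, g x a s * (g x)⁻¹ s t *
      (pd (fun y => g y t b) k x + pd (fun y => g y t k) b x - pd (fun y => g y k b) t x)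
      = kron a t * (pd (fun y => g y t b) k x + pd (fun y => g y t k) b x
          - pd (fun y => g y k b) t x) := by
    intro t
    rw [← Finset.sum_mul, mul_inv_entry (hg.2.2 x hx)]
  rw [Finset.sum_congr rfl fun t _ => e2 t]
  simp [kron]

/-- metricity: `∂_k g_{ab} = g_{as} Γ^s_{kb} + Γ^s_{ka} g_{sb}` -/
theorem metricity (hUo : IsOpen U) (hg : IsMetricOn g U) (hx : x ∈ U) (k a b : Fin n) :
    pd (fun y => g y a b) k x
      = ∑ s, g x a s * Christoffel g s k b x + ∑ s, Christoffel g s k a x * g x s b := by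
  have h2 : ∑ s, Christoffel g s k a x * g x s b = ∑ s, g x b s * Christoffel g s k a x := by
    apply Finset.sum_congr rfl
    intro s _
    rw [g_symm hg hx s b]; ring
  rw [h2, Gamma_low hg hx a k b, Gamma_low hg hx b k a]
  have e1 : pd (fun y => g y b a) k x = pd (fun y => g y a b) k x :=
    pd_congr hUo hx fun y hy => g_symm hg hy b a
  have e2 : pd (fun y => g y b k) a x = pd (fun y => g y k b) a x :=
    pd_congr hUo hx fun y hy => g_symm hg hy b k
  have e3 : pd (fun y => g y a k) b x = pd (fun y => g y k a) b x :=
    pd_congr hUo hx fun y hy => g_symm hg hy a k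
  rw [e1, e2, e3]
  ring

/-- the raw derivative of the lowered operator from geodesic compatibility -/
theorem pd_lowL (hgeo : GeodCompatOn g L U) (hx : x ∈ U) (k i j : Fin n) :
    pd (fun y => lowL g L y i j) k x
      = pd (lamL L) i x * g x j k + pd (lamL L) j x * g x i k
        + ∑ s, Christoffel g s k i x * lowL g L x s j
        + ∑ s, Christoffel g s k j x * lowL g L x i s := by
  have h := hgeo.2.2 x hx k i j
  unfold covL at h
  linarith

end Derivatives
section PdGh

variable {n : ℕ} {U : Set (Fin n → ℝ)} {x : Fin n → ℝ}
variable {g L : (Fin n → ℝ) → Matrix (Fin n) (Fin n) ℝ}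

theorem step_e (G M Gam : Matrix (Fin n) (Fin n) ℝ) (li gc : Fin n → ℝ) (hM : IsUnit M.det) :
    (G * Gam + Gamᵀ * G) * M⁻¹ * G
      + G * (-(M⁻¹ * (Matrix.vecMulVec li gc + Matrix.vecMulVec gc li
          + Gamᵀ * M + M * Gam) * M⁻¹)) * G
      + G * M⁻¹ * (G * Gam + Gamᵀ * G)
    = Gamᵀ * (G * M⁻¹ * G) + (G * M⁻¹ * G) * Gam
      - Matrix.vecMulVec ((G * M⁻¹).mulVec li) (Matrix.vecMul gc (M⁻¹ * G))
      - Matrix.vecMulVec ((G * M⁻¹).mulVec gc) (Matrix.vecMul li (M⁻¹ * G)) := by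
  simp only [Matrix.mul_add, Matrix.add_mul, Matrix.mul_neg, Matrix.neg_mul,
    vecMulVec_mul, mul_vecMulVec, Matrix.mulVec_mulVec, Matrix.vecMul_vecMul,
    Matrix.mul_assoc]
  simp only [Matrix.mul_nonsing_inv_cancel_left _ _ hM, Matrix.nonsing_inv_mul_cancel_left _ _ hM]
  abel

end PdGh

section PdGh2

variable {n : ℕ} {U : Set (Fin n → ℝ)} {x : Fin n → ℝ}
variable {g L : (Fin n → ℝ) → Matrix (Fin n) (Fin n) ℝ}

/-- matrix of raw derivatives of `g` -/
theorem dg_eq (hUo : IsOpen U) (hg : IsMetricOn g U) (hx : x ∈ U) (k : Fin n) :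
    (Matrix.of fun a b => pd (fun y => g y a b) k x)
      = g x * (Matrix.of fun s a => Christoffel g s k a x)
        + (Matrix.of fun s a => Christoffel g s k a x)ᵀ * g x := by
  ext a b
  show pd (fun y => g y a b) k x = _
  rw [metricity hUo hg hx k a b]
  simp [Matrix.mul_apply, Matrix.add_apply, Matrix.transpose_apply]

/-- matrix of raw derivatives of `M` -/
theorem dM_eq (hgeo : GeodCompatOn g L U) (hx : x ∈ U) (k : Fin n) :
    (Matrix.of fun a b => pd (fun y => lowL g L y a b) k x)
      = Matrix.vecMulVec (fun a => pd (lamL L) a x) (fun a => g x a k)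
        + Matrix.vecMulVec (fun a => g x a k) (fun a => pd (lamL L) a x)
        + (Matrix.of fun s a => Christoffel g s k a x)ᵀ * Mm g L x
        + Mm g L x * (Matrix.of fun s a => Christoffel g s k a x) := by
  ext a b
  show pd (fun y => lowL g L y a b) k x = _
  rw [pd_lowL hgeo hx k a b]
  simp only [Matrix.add_apply, Matrix.vecMulVec_apply, Matrix.mul_apply,
    Matrix.transpose_apply, Matrix.of_apply, Mm]
  have h2 : ∑ s, Christoffel g s k b x * lowL g L x a s
      = ∑ s, lowL g L x a s * Christoffel g s k b x :=
    Finset.sum_congr rfl fun s _ => mul_comm _ _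
  rw [h2]
  ring

/-- matrix of raw derivatives of `M⁻¹` -/
theorem dMi_eq (hUo : IsOpen U) (hg : IsMetricOn g U) (hgeo : GeodCompatOn g L U)
    (hnd : ∀ x ∈ U, (L x).det ≠ 0) (hx : x ∈ U) (k : Fin n) :
    (Matrix.of fun a b => pd (fun y => (Mm g L y)⁻¹ a b) k x)
      = -((Mm g L x)⁻¹ * (Matrix.of fun a b => pd (fun y => lowL g L y a b) k x)
          * (Mm g L x)⁻¹) := by
  ext a b
  show pd (fun y => (Mm g L y)⁻¹ a b) k x = _
  rw [pd_inv_entry hUo (sm_M hg hgeo) (fun y hy => det_M_ne hg hnd hy) hx a b]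
  rw [Matrix.neg_apply, mul3_apply]
  simp only [Mm, Matrix.of_apply]

/-- `∇_k ĝ_{ij}`-formula: raw derivative of the entries of `ĝ = g L⁻¹` -/
theorem pd_gh_entry (hUo : IsOpen U) (hg : IsMetricOn g U) (hgeo : GeodCompatOn g L U)
    (hnd : ∀ x ∈ U, (L x).det ≠ 0) (hx : x ∈ U) (k i j : Fin n) :
    pd (fun y => (g y * (L y)⁻¹) i j) k x
      = ∑ s, Christoffel g s k i x * (g x * (L x)⁻¹) s j
        + ∑ s, Christoffel g s k j x * (g x * (L x)⁻¹) i s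
        - (g x * (L x)⁻¹) i k * lamhat g L j x
        - lamhat g L i x * (g x * (L x)⁻¹) k j := by
  classical
  have hGdet := hg.2.2 x hx
  have hMdet := det_M_ne hg hnd hx
  have diffG : ∀ a b, DifferentiableAt ℝ (fun y => g y a b) x :=
    fun a b => sm_dAt (hg.1 a b) hUo hx
  have diffMi : ∀ a b, DifferentiableAt ℝ (fun y => (Mm g L y)⁻¹ a b) x :=
    fun a b => sm_dAt (sm_Minv hg hgeo hnd a b) hUo hx
  -- Step A
  have stepA : pd (fun y => (g y * (L y)⁻¹) i j) k x
      = ((Matrix.of fun a b => pd (fun y => g y a b) k x) * (Mm g L x)⁻¹ * g x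
        + g x * (Matrix.of fun a b => pd (fun y => (Mm g L y)⁻¹ a b) k x) * g x
        + g x * (Mm g L x)⁻¹ * (Matrix.of fun a b => pd (fun y => g y a b) k x)) i j := by
    have e0 : pd (fun y => (g y * (L y)⁻¹) i j) k x
        = pd (fun y => ∑ p, ∑ q, g y i p * (Mm g L y)⁻¹ p q * g y q j) k x := by
      apply pd_congr hUo hx
      intro y hy
      rw [← mul3_apply, ← gh_eq hg hgeo hy]
    rw [e0]
    rw [pd_sum Finset.univ _ (fun p _ => DifferentiableAt.fun_sum
      (fun q _ => ((diffG i p).fun_mul (diffMi p q)).fun_mul (diffG q j)))]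
    have e1 : ∀ p : Fin n, pd (fun y => ∑ q, g y i p * (Mm g L y)⁻¹ p q * g y q j) k x
        = ∑ q, (pd (fun y => g y i p) k x * (Mm g L x)⁻¹ p q * g x q j
            + g x i p * pd (fun y => (Mm g L y)⁻¹ p q) k x * g x q j
            + g x i p * (Mm g L x)⁻¹ p q * pd (fun y => g y q j) k x) := by
      intro p
      rw [pd_sum Finset.univ _ (fun q _ => ((diffG i p).fun_mul (diffMi p q)).fun_mul (diffG q j))]
      exact Finset.sum_congr rfl fun q _ => pd_mul3 (diffG i p) (diffMi p q) (diffG q j)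
    rw [Finset.sum_congr rfl fun p _ => e1 p]
    simp only [Matrix.add_apply, mul3_apply, Matrix.of_apply, ← Finset.sum_add_distrib]
  -- Step C : matrix algebra
  have key : (Matrix.of fun a b => pd (fun y => g y a b) k x) * (Mm g L x)⁻¹ * g x
        + g x * (Matrix.of fun a b => pd (fun y => (Mm g L y)⁻¹ a b) k x) * g x
        + g x * (Mm g L x)⁻¹ * (Matrix.of fun a b => pd (fun y => g y a b) k x)
      = (Matrix.of fun s a => Christoffel g s k a x)ᵀ * (g x * (Mm g L x)⁻¹ * g x)
        + (g x * (Mm g L x)⁻¹ * g x) * (Matrix.of fun s a => Christoffel g s k a x)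
        - Matrix.vecMulVec ((g x * (Mm g L x)⁻¹).mulVec (fun a => pd (lamL L) a x))
            (Matrix.vecMul (fun a => g x a k) ((Mm g L x)⁻¹ * g x))
        - Matrix.vecMulVec ((g x * (Mm g L x)⁻¹).mulVec (fun a => g x a k))
            (Matrix.vecMul (fun a => pd (lamL L) a x) ((Mm g L x)⁻¹ * g x)) := by
    rw [dMi_eq hUo hg hgeo hnd hx k, dM_eq hgeo hx k, dg_eq hUo hg hx k]
    exact step_e (g x) (Mm g L x) _ _ _ (isUnit_iff_ne_zero.2 hMdet)
  rw [stepA, key]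
  -- entry conversions
  have hGsym : (g x)ᵀ = g x := hg.2.1 x hx
  have hsymMiG : ∀ b jj : Fin n, ((Mm g L x)⁻¹ * g x) b jj = (g x * (Mm g L x)⁻¹) jj b := by
    intro b jj
    have h : ((Mm g L x)⁻¹ * g x)ᵀ = g x * (Mm g L x)⁻¹ := by
      rw [Matrix.transpose_mul, Minv_symm hg hgeo hx, hGsym]
    conv_lhs => rw [show ((Mm g L x)⁻¹ * g x) b jj = (((Mm g L x)⁻¹ * g x)ᵀ) jj b from rfl]
    rw [h]
  have hw : ∀ ii : Fin n, ((g x * (Mm g L x)⁻¹).mulVec (fun a => g x a k)) ii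
      = (g x * (L x)⁻¹) ii k := by
    intro ii
    rw [gh_eq hg hgeo hx, Matrix.mul_apply]
    simp [Matrix.mulVec, dotProduct]
  have hv : ∀ jj : Fin n, Matrix.vecMul (fun a => g x a k) ((Mm g L x)⁻¹ * g x) jj
      = (g x * (L x)⁻¹) jj k := by
    intro jj
    rw [← hw jj]
    simp only [Matrix.vecMul, Matrix.mulVec, dotProduct]
    apply Finset.sum_congr rfl
    intro b _
    rw [hsymMiG b jj]
    ring
  have hlam : ∀ ii : Fin n, ((g x * (Mm g L x)⁻¹).mulVec (fun a => pd (lamL L) a x)) ii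
      = lamhat g L ii x := by
    intro ii
    have h1 : (g x * (Mm g L x)⁻¹ * g x) * (g x)⁻¹ = g x * (Mm g L x)⁻¹ := by
      rw [Matrix.mul_assoc (g x * (Mm g L x)⁻¹),
        Matrix.mul_nonsing_inv _ (isUnit_iff_ne_zero.2 hGdet), Matrix.mul_one]
    have h2 : lamhat g L ii x
        = ∑ t, ((g x * (Mm g L x)⁻¹ * g x) * (g x)⁻¹) ii t * pd (lamL L) t x := by
      calc lamhat g L ii x = ∑ s, (g x * (L x)⁻¹) ii s * lamup g L s x := rfl
        _ = ∑ s, (g x * (Mm g L x)⁻¹ * g x) ii s * ∑ t, (g x)⁻¹ s t * pd (lamL L) t x := by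
            rw [gh_eq hg hgeo hx]; rfl
        _ = ∑ t, (∑ s, (g x * (Mm g L x)⁻¹ * g x) ii s * (g x)⁻¹ s t) * pd (lamL L) t x := by
            simp_rw [Finset.mul_sum, Finset.sum_mul]
            rw [Finset.sum_comm]
            exact Finset.sum_congr rfl fun t _ => Finset.sum_congr rfl fun s _ => by ring
        _ = ∑ t, ((g x * (Mm g L x)⁻¹ * g x) * (g x)⁻¹) ii t * pd (lamL L) t x := by
            exact Finset.sum_congr rfl fun t _ => by rw [Matrix.mul_apply]
    rw [h2, h1]
    simp [Matrix.mulVec, dotProduct]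
  have hz : ∀ jj : Fin n, Matrix.vecMul (fun a => pd (lamL L) a x) ((Mm g L x)⁻¹ * g x) jj
      = lamhat g L jj x := by
    intro jj
    rw [← hlam jj]
    simp only [Matrix.vecMul, Matrix.mulVec, dotProduct]
    apply Finset.sum_congr rfl
    intro b _
    rw [hsymMiG b jj]
    ring
  -- final assembly
  rw [← gh_eq hg hgeo hx]
  simp only [Matrix.sub_apply, Matrix.add_apply, Matrix.vecMulVec_apply]
  rw [hlam i, hv j, hw i, hz j]
  have hA : ((Matrix.of fun s a => Christoffel g s k a x)ᵀ * (g x * (L x)⁻¹)) i j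
      = ∑ s, Christoffel g s k i x * (g x * (L x)⁻¹) s j := by
    rw [Matrix.mul_apply]
    exact Finset.sum_congr rfl fun s _ => by
      rw [Matrix.transpose_apply, Matrix.of_apply]
  have hB : ((g x * (L x)⁻¹) * (Matrix.of fun s a => Christoffel g s k a x)) i j
      = ∑ s, Christoffel g s k j x * (g x * (L x)⁻¹) i s := by
    rw [Matrix.mul_apply]
    exact Finset.sum_congr rfl fun s _ => by
      rw [Matrix.of_apply]; ring
  rw [hA, hB]
  rw [gh_symm_entry hg hgeo hx j k]
  ring

end PdGh2
section GammaGh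

variable {n : ℕ} {U : Set (Fin n → ℝ)} {x : Fin n → ℝ}
variable {g L : (Fin n → ℝ) → Matrix (Fin n) (Fin n) ℝ}

/-- `Γ̂^i_{jk} = Γ^i_{jk} − λ^i ĝ_{jk}` -/
theorem Gamma_gh (hUo : IsOpen U) (hg : IsMetricOn g U) (hgeo : GeodCompatOn g L U)
    (hnd : ∀ x ∈ U, (L x).det ≠ 0) (hx : x ∈ U) (i j k : Fin n) :
    Christoffel (fun y => g y * (L y)⁻¹) i j k x
      = Christoffel g i j k x - lamup g L i x * (g x * (L x)⁻¹) j k := by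
  classical
  have hghdet : (g x * (L x)⁻¹).det ≠ 0 := det_gh_ne hg hnd hx
  have hcontr : ∀ t : Fin n, ∑ s, (g x * (L x)⁻¹)⁻¹ i s * (g x * (L x)⁻¹) s t = kron i t :=
    fun t => inv_mul_entry (A := fun y => g y * (L y)⁻¹) hghdet i t
  have inner : ∀ s : Fin n,
      pd (fun y => (g y * (L y)⁻¹) s k) j x + pd (fun y => (g y * (L y)⁻¹) s j) k x
        - pd (fun y => (g y * (L y)⁻¹) j k) s x
      = 2 * (∑ r, Christoffel g r j k x * (g x * (L x)⁻¹) s r)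
        - 2 * (lamhat g L s x * (g x * (L x)⁻¹) j k) := by
    intro s
    rw [pd_gh_entry hUo hg hgeo hnd hx j s k, pd_gh_entry hUo hg hgeo hnd hx k s j,
      pd_gh_entry hUo hg hgeo hnd hx s j k]
    have c1 : ∑ r, Christoffel g r j s x * (g x * (L x)⁻¹) r k
        = ∑ r, Christoffel g r s j x * (g x * (L x)⁻¹) r k :=
      Finset.sum_congr rfl fun r _ => by rw [Gamma_symm hUo hg hx r j s]
    have c2 : ∑ r, Christoffel g r k s x * (g x * (L x)⁻¹) r j
        = ∑ r, Christoffel g r s k x * (g x * (L x)⁻¹) j r :=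
      Finset.sum_congr rfl fun r _ => by
        rw [Gamma_symm hUo hg hx r k s, gh_symm_entry hg hgeo hx r j]
    have c3 : ∑ r, Christoffel g r k j x * (g x * (L x)⁻¹) s r
        = ∑ r, Christoffel g r j k x * (g x * (L x)⁻¹) s r :=
      Finset.sum_congr rfl fun r _ => by rw [Gamma_symm hUo hg hx r k j]
    rw [c1, c2, c3, gh_symm_entry hg hgeo hx s j, gh_symm_entry hg hgeo hx k j]
    ring
  have step : Christoffel (fun y => g y * (L y)⁻¹) i j k x
      = (1/2 : ℝ) * ∑ s, (g x * (L x)⁻¹)⁻¹ i s *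
        (2 * (∑ r, Christoffel g r j k x * (g x * (L x)⁻¹) s r)
          - 2 * (lamhat g L s x * (g x * (L x)⁻¹) j k)) := by
    conv_lhs => unfold Christoffel
    simp only [inner]
  have hT1 : ∑ s, (g x * (L x)⁻¹)⁻¹ i s * (∑ r, Christoffel g r j k x * (g x * (L x)⁻¹) s r)
      = Christoffel g i j k x := by
    have h1 : ∀ r : Fin n, ∑ s, (g x * (L x)⁻¹)⁻¹ i s
        * (Christoffel g r j k x * (g x * (L x)⁻¹) s r)
        = Christoffel g r j k x * kron i r := by
      intro r
      rw [← hcontr r, Finset.mul_sum]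
      exact Finset.sum_congr rfl fun s _ => by ring
    simp_rw [Finset.mul_sum]
    rw [Finset.sum_comm]
    rw [Finset.sum_congr rfl fun r _ => h1 r]
    simp [kron]
  have hT2 : ∑ s, (g x * (L x)⁻¹)⁻¹ i s * lamhat g L s x = lamup g L i x := by
    have h0 : ∀ s : Fin n, lamhat g L s x = ∑ t, (g x * (L x)⁻¹) s t * lamup g L t x :=
      fun s => rfl
    simp_rw [h0, Finset.mul_sum]
    rw [Finset.sum_comm]
    have h2 : ∀ t : Fin n, ∑ s, (g x * (L x)⁻¹)⁻¹ i s
        * ((g x * (L x)⁻¹) s t * lamup g L t x) = kron i t * lamup g L t x := by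
      intro t
      rw [← hcontr t, Finset.sum_mul]
      exact Finset.sum_congr rfl fun s _ => by ring
    rw [Finset.sum_congr rfl fun t _ => h2 t]
    exact kron_sum_left _ i
  rw [step]
  have expand : ∀ s : Fin n, (g x * (L x)⁻¹)⁻¹ i s *
      (2 * (∑ r, Christoffel g r j k x * (g x * (L x)⁻¹) s r)
        - 2 * (lamhat g L s x * (g x * (L x)⁻¹) j k))
      = 2 * ((g x * (L x)⁻¹)⁻¹ i s * (∑ r, Christoffel g r j k x * (g x * (L x)⁻¹) s r))
        - 2 * ((g x * (L x)⁻¹)⁻¹ i s * lamhat g L s x) * (g x * (L x)⁻¹) j k := by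
    intro s; ring
  rw [Finset.sum_congr rfl fun s _ => expand s]
  rw [Finset.sum_sub_distrib]
  simp_rw [mul_assoc (2:ℝ), ← Finset.mul_sum]
  rw [← Finset.sum_mul, hT1]
  rw [show ∑ s, (g x * (L x)⁻¹)⁻¹ i s * lamhat g L s x = lamup g L i x from hT2]
  ring
end GammaGh
section CurvGh

variable {n : ℕ} {U : Set (Fin n → ℝ)} {x : Fin n → ℝ}
variable {g L : (Fin n → ℝ) → Matrix (Fin n) (Fin n) ℝ}

theorem Curv_gh (hUo : IsOpen U) (hg : IsMetricOn g U) (hgeo : GeodCompatOn g L U)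
    (hnd : ∀ x ∈ U, (L x).det ≠ 0) (hflat : IsFlatOn g U) (hx : x ∈ U) (l i j k : Fin n) :
    Curv (fun y => g y * (L y)⁻¹) l i j k x
      = Nab g L l k x * (g x * (L x)⁻¹) i j - Nab g L l j x * (g x * (L x)⁻¹) i k := by
  classical
  have dGam : ∀ a b c : Fin n, DifferentiableAt ℝ (Christoffel g a b c) x :=
    fun a b c => sm_dAt (sm_Gamma hUo hg a b c) hUo hx
  have dlam : ∀ a : Fin n, DifferentiableAt ℝ (lamup g L a) x :=
    fun a => sm_dAt (sm_lamup hUo hg hgeo a) hUo hx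
  have dgh : ∀ a b : Fin n, DifferentiableAt ℝ (fun y => (g y * (L y)⁻¹) a b) x :=
    fun a b => sm_dAt (sm_gh hg hgeo hnd a b) hUo hx
  have pdGh : ∀ b c d : Fin n, pd (Christoffel (fun y => g y * (L y)⁻¹) l b c) d x
      = pd (Christoffel g l b c) d x
        - (lamup g L l x * pd (fun y => (g y * (L y)⁻¹) b c) d x
          + (g x * (L x)⁻¹) b c * pd (lamup g L l) d x) := by
    intro b c d
    have e0 : pd (Christoffel (fun y => g y * (L y)⁻¹) l b c) d x
        = pd (fun y => Christoffel g l b c y - lamup g L l y * (g y * (L y)⁻¹) b c) d x :=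
      pd_congr hUo hx fun y hy => Gamma_gh hUo hg hgeo hnd hy l b c
    rw [e0, pd_sub (dGam l b c) ((dlam l).fun_mul (dgh b c)), pd_mul (dlam l) (dgh b c)]
  show pd (Christoffel (fun y => g y * (L y)⁻¹) l i k) j x
      - pd (Christoffel (fun y => g y * (L y)⁻¹) l i j) k x
      + ∑ s, (Christoffel (fun y => g y * (L y)⁻¹) l j s x
            * Christoffel (fun y => g y * (L y)⁻¹) s i k x
          - Christoffel (fun y => g y * (L y)⁻¹) l k s x
            * Christoffel (fun y => g y * (L y)⁻¹) s i j x)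
      = _
  rw [pdGh i k j, pdGh i j k]
  rw [pd_gh_entry hUo hg hgeo hnd hx j i k, pd_gh_entry hUo hg hgeo hnd hx k i j]
  have bigsum : ∑ s, (Christoffel (fun y => g y * (L y)⁻¹) l j s x
          * Christoffel (fun y => g y * (L y)⁻¹) s i k x
        - Christoffel (fun y => g y * (L y)⁻¹) l k s x
          * Christoffel (fun y => g y * (L y)⁻¹) s i j x)
      = ∑ s, (Christoffel g l j s x * Christoffel g s i k x
            - Christoffel g l k s x * Christoffel g s i j x)
        - (∑ s, Christoffel g l j s x * lamup g L s x) * (g x * (L x)⁻¹) i k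
        - lamup g L l x * ∑ s, (g x * (L x)⁻¹) j s * Christoffel g s i k x
        + lamup g L l x * (lamhat g L j x * (g x * (L x)⁻¹) i k)
        + (∑ s, Christoffel g l k s x * lamup g L s x) * (g x * (L x)⁻¹) i j
        + lamup g L l x * ∑ s, (g x * (L x)⁻¹) k s * Christoffel g s i j x
        - lamup g L l x * (lamhat g L k x * (g x * (L x)⁻¹) i j) := by
    have e : ∀ s : Fin n, Christoffel (fun y => g y * (L y)⁻¹) l j s x
          * Christoffel (fun y => g y * (L y)⁻¹) s i k x
        - Christoffel (fun y => g y * (L y)⁻¹) l k s x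
          * Christoffel (fun y => g y * (L y)⁻¹) s i j x
        = (Christoffel g l j s x * Christoffel g s i k x
            - Christoffel g l k s x * Christoffel g s i j x)
          - (Christoffel g l j s x * lamup g L s x) * (g x * (L x)⁻¹) i k
          - lamup g L l x * ((g x * (L x)⁻¹) j s * Christoffel g s i k x)
          + lamup g L l x * ((g x * (L x)⁻¹) j s * lamup g L s x * (g x * (L x)⁻¹) i k)
          + (Christoffel g l k s x * lamup g L s x) * (g x * (L x)⁻¹) i j
          + lamup g L l x * ((g x * (L x)⁻¹) k s * Christoffel g s i j x)
          - lamup g L l x * ((g x * (L x)⁻¹) k s * lamup g L s x * (g x * (L x)⁻¹) i j) := by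
      intro s
      rw [Gamma_gh hUo hg hgeo hnd hx l j s, Gamma_gh hUo hg hgeo hnd hx s i k,
        Gamma_gh hUo hg hgeo hnd hx l k s, Gamma_gh hUo hg hgeo hnd hx s i j]
      ring
    rw [Finset.sum_congr rfl fun s _ => e s]
    simp only [Finset.sum_add_distrib, Finset.sum_sub_distrib, ← Finset.mul_sum,
      ← Finset.sum_mul]
    rfl
  rw [bigsum]
  have hflat0 : pd (Christoffel g l i k) j x - pd (Christoffel g l i j) k x
      + ∑ s, (Christoffel g l j s x * Christoffel g s i k x
          - Christoffel g l k s x * Christoffel g s i j x) = 0 := hflat x hx l i j k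
  -- conversions of sums
  have E1 : ∑ s, Christoffel g s j k x * (g x * (L x)⁻¹) i s
      = ∑ s, Christoffel g s k j x * (g x * (L x)⁻¹) i s :=
    Finset.sum_congr rfl fun s _ => by rw [Gamma_symm hUo hg hx s j k]
  have E2 : ∑ s, (g x * (L x)⁻¹) j s * Christoffel g s i k x
      = ∑ s, Christoffel g s k i x * (g x * (L x)⁻¹) s j :=
    Finset.sum_congr rfl fun s _ => by
      rw [Gamma_symm hUo hg hx s i k, gh_symm_entry hg hgeo hx j s]; ring
  have E3 : ∑ s, (g x * (L x)⁻¹) k s * Christoffel g s i j x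
      = ∑ s, Christoffel g s j i x * (g x * (L x)⁻¹) s k :=
    Finset.sum_congr rfl fun s _ => by
      rw [Gamma_symm hUo hg hx s i j, gh_symm_entry hg hgeo hx k s]; ring
  have E4 : (g x * (L x)⁻¹) k j = (g x * (L x)⁻¹) j k := gh_symm_entry hg hgeo hx k j
  rw [E1, E2, E3, E4]
  show _ = (pd (lamup g L l) k x + ∑ s, Christoffel g l k s x * lamup g L s x)
        * (g x * (L x)⁻¹) i j
      - (pd (lamup g L l) j x + ∑ s, Christoffel g l j s x * lamup g L s x)
        * (g x * (L x)⁻¹) i k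
  linear_combination hflat0

end CurvGh
section Characterization

variable {n : ℕ} {U : Set (Fin n → ℝ)} {x : Fin n → ℝ}
variable {g L : (Fin n → ℝ) → Matrix (Fin n) (Fin n) ℝ}

theorem contract_gh (hUo : IsOpen U) (hg : IsMetricOn g U) (hgeo : GeodCompatOn g L U)
    (hnd : ∀ x ∈ U, (L x).det ≠ 0) (hflat : IsFlatOn g U) (hx : x ∈ U) (i j k m : Fin n) :
    ∑ s, (g x * (L x)⁻¹)⁻¹ j s * Curv (fun y => g y * (L y)⁻¹) i s k m x
      = Nab g L i m x * kron j k - Nab g L i k x * kron j m := by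
  have e : ∀ s : Fin n, (g x * (L x)⁻¹)⁻¹ j s * Curv (fun y => g y * (L y)⁻¹) i s k m x
      = Nab g L i m x * ((g x * (L x)⁻¹)⁻¹ j s * (g x * (L x)⁻¹) s k)
        - Nab g L i k x * ((g x * (L x)⁻¹)⁻¹ j s * (g x * (L x)⁻¹) s m) := by
    intro s
    rw [Curv_gh hUo hg hgeo hnd hflat hx i s k m]
    ring
  rw [Finset.sum_congr rfl fun s _ => e s, Finset.sum_sub_distrib, ← Finset.mul_sum,
    ← Finset.mul_sum, inv_mul_entry (A := fun y => g y * (L y)⁻¹) (det_gh_ne hg hnd hx) j k,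
    inv_mul_entry (A := fun y => g y * (L y)⁻¹) (det_gh_ne hg hnd hx) j m]

/-- forward direction: constant curvature of `gL⁻¹` forces `∇_m λ^i = -K δ^i_m`. -/
theorem nab_of_constcurv (hn : 2 ≤ n) (hUo : IsOpen U) (hg : IsMetricOn g U)
    (hgeo : GeodCompatOn g L U) (hnd : ∀ x ∈ U, (L x).det ≠ 0) (hflat : IsFlatOn g U)
    {K : ℝ} (hK : HasConstCurvOn (fun x => g x * (L x)⁻¹) U K) (hx : x ∈ U) (i m : Fin n) :
    Nab g L i m x = -K * kron i m := by
  have : Nontrivial (Fin n) := Fin.nontrivial_iff_two_le.mpr hn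
  obtain ⟨j, hj⟩ := exists_ne m
  have h1 := hK x hx i j j m
  rw [contract_gh hUo hg hgeo hnd hflat hx i j j m] at h1
  have h2 : kron j j = 1 := by simp [kron]
  have h3 : kron j m = 0 := by simp [kron, hj]
  rw [h2, h3] at h1
  have h4 : (if j = m then (1:ℝ) else 0) = 0 := by simp [hj]
  rw [h4] at h1
  simp only [eq_self_iff_true, if_true] at h1
  have h5 : Nab g L i m x
      = K * ((if i = j then (1:ℝ) else 0) * 0 - (if i = m then (1:ℝ) else 0) * 1) := by
    rw [← h1]; ring
  rw [h5]
  simp only [kron, mul_zero, mul_one, zero_sub]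
  ring

/-- converse direction. -/
theorem constcurv_of_nab (hUo : IsOpen U) (hg : IsMetricOn g U)
    (hgeo : GeodCompatOn g L U) (hnd : ∀ x ∈ U, (L x).det ≠ 0) (hflat : IsFlatOn g U)
    {K : ℝ} (hN : ∀ x ∈ U, ∀ i m : Fin n, Nab g L i m x = -K * kron i m) :
    HasConstCurvOn (fun x => g x * (L x)⁻¹) U K := by
  intro x hx i j k m
  rw [contract_gh hUo hg hgeo hnd hflat hx i j k m, hN x hx i m, hN x hx i k]
  simp only [kron]
  ring

end Characterization
section Pencil

variable {n : ℕ} {U : Set (Fin n → ℝ)} {x : Fin n → ℝ}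
variable {g L₁ L₂ : (Fin n → ℝ) → Matrix (Fin n) (Fin n) ℝ} {α β : ℝ}

theorem P_entry (α β : ℝ) (L₁ L₂ : (Fin n → ℝ) → Matrix (Fin n) (Fin n) ℝ)
    (y : Fin n → ℝ) (i j : Fin n) :
    (α • L₁ y + β • L₂ y) i j = α * L₁ y i j + β * L₂ y i j := by
  simp [Matrix.add_apply, Matrix.smul_apply, smul_eq_mul]

theorem sm_lowL (hg : IsMetricOn g U) (hgeo : GeodCompatOn g L₁ U) (i j : Fin n) :
    Sm U fun y => lowL g L₁ y i j := by
  show Sm U fun y => ∑ s, L₁ y s i * g y s j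
  exact ContDiffOn.sum fun s _ => (hgeo.1 s i).mul (hg.1 s j)

theorem lowP (y : Fin n → ℝ) (i j : Fin n) :
    lowL g (fun z => α • L₁ z + β • L₂ z) y i j
      = α * lowL g L₁ y i j + β * lowL g L₂ y i j := by
  unfold lowL
  simp only [P_entry]
  rw [Finset.mul_sum, Finset.mul_sum, ← Finset.sum_add_distrib]
  exact Finset.sum_congr rfl fun s _ => by ring

theorem lamP (y : Fin n → ℝ) :
    lamL (fun z => α • L₁ z + β • L₂ z) y = α * lamL L₁ y + β * lamL L₂ y := by
  unfold lamL
  simp only [P_entry]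
  rw [Finset.sum_add_distrib, ← Finset.mul_sum, ← Finset.mul_sum]
  ring

theorem pd_lamP (hUo : IsOpen U) (hgeo₁ : GeodCompatOn g L₁ U) (hgeo₂ : GeodCompatOn g L₂ U)
    (hx : x ∈ U) (s : Fin n) :
    pd (lamL (fun z => α • L₁ z + β • L₂ z)) s x
      = α * pd (lamL L₁) s x + β * pd (lamL L₂) s x := by
  have d1 := sm_dAt (sm_lam hgeo₁) hUo hx
  have d2 := sm_dAt (sm_lam hgeo₂) hUo hx
  rw [show lamL (fun z => α • L₁ z + β • L₂ z)
      = fun y => α * lamL L₁ y + β * lamL L₂ y from funext (fun y => lamP y)]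
  rw [pd_add (d1.const_mul α) (d2.const_mul β), pd_const_mul α d1, pd_const_mul β d2]

theorem geodP (hUo : IsOpen U) (hg : IsMetricOn g U) (hgeo₁ : GeodCompatOn g L₁ U)
    (hgeo₂ : GeodCompatOn g L₂ U) :
    GeodCompatOn g (fun z => α • L₁ z + β • L₂ z) U := by
  refine ⟨?_, ?_, ?_⟩
  · intro i j
    have : (fun y => (α • L₁ y + β • L₂ y) i j)
        = fun y => α * L₁ y i j + β * L₂ y i j := funext fun y => P_entry α β L₁ L₂ y i j
    rw [this]
    exact (contDiffOn_const.mul (hgeo₁.1 i j)).add (contDiffOn_const.mul (hgeo₂.1 i j))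
  · intro y hy i j
    rw [lowP, lowP, hgeo₁.2.1 y hy i j, hgeo₂.2.1 y hy i j]
  · intro y hy k i j
    have dl1 : DifferentiableAt ℝ (fun z => lowL g L₁ z i j) y :=
      sm_dAt (sm_lowL hg hgeo₁ i j) hUo hy
    have dl2 : DifferentiableAt ℝ (fun z => lowL g L₂ z i j) y :=
      sm_dAt (sm_lowL hg hgeo₂ i j) hUo hy
    have hpd : pd (fun z => lowL g (fun w => α • L₁ w + β • L₂ w) z i j) k y
        = α * pd (fun z => lowL g L₁ z i j) k y + β * pd (fun z => lowL g L₂ z i j) k y := by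
      rw [show (fun z => lowL g (fun w => α • L₁ w + β • L₂ w) z i j)
          = fun z => α * lowL g L₁ z i j + β * lowL g L₂ z i j from
          funext fun z => lowP z i j]
      rw [pd_add (dl1.const_mul α) (dl2.const_mul β), pd_const_mul α dl1, pd_const_mul β dl2]
    have hcov : covL g (fun w => α • L₁ w + β • L₂ w) k i j y
        = α * covL g L₁ k i j y + β * covL g L₂ k i j y := by
      unfold covL
      rw [hpd]
      simp only [lowP]
      have d3 : ∑ s, Christoffel g s k i y * (α * lowL g L₁ y s j + β * lowL g L₂ y s j)
          = α * ∑ s, Christoffel g s k i y * lowL g L₁ y s j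
            + β * ∑ s, Christoffel g s k i y * lowL g L₂ y s j := by
        rw [Finset.mul_sum, Finset.mul_sum, ← Finset.sum_add_distrib]
        exact Finset.sum_congr rfl fun s _ => by ring
      have d4 : ∑ s, Christoffel g s k j y * (α * lowL g L₁ y i s + β * lowL g L₂ y i s)
          = α * ∑ s, Christoffel g s k j y * lowL g L₁ y i s
            + β * ∑ s, Christoffel g s k j y * lowL g L₂ y i s := by
        rw [Finset.mul_sum, Finset.mul_sum, ← Finset.sum_add_distrib]
        exact Finset.sum_congr rfl fun s _ => by ring
      rw [d3, d4]
      ring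
    rw [hcov, hgeo₁.2.2 y hy k i j, hgeo₂.2.2 y hy k i j,
      pd_lamP hUo hgeo₁ hgeo₂ hy i, pd_lamP hUo hgeo₁ hgeo₂ hy j]
    ring

theorem lamupP (hUo : IsOpen U) (hgeo₁ : GeodCompatOn g L₁ U) (hgeo₂ : GeodCompatOn g L₂ U)
    (hx : x ∈ U) (i : Fin n) :
    lamup g (fun z => α • L₁ z + β • L₂ z) i x
      = α * lamup g L₁ i x + β * lamup g L₂ i x := by
  unfold lamup
  have e : ∀ s : Fin n, (g x)⁻¹ i s * pd (lamL (fun z => α • L₁ z + β • L₂ z)) s x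
      = α * ((g x)⁻¹ i s * pd (lamL L₁) s x) + β * ((g x)⁻¹ i s * pd (lamL L₂) s x) := by
    intro s
    rw [pd_lamP hUo hgeo₁ hgeo₂ hx s]
    ring
  rw [Finset.sum_congr rfl fun s _ => e s, Finset.sum_add_distrib,
    ← Finset.mul_sum, ← Finset.mul_sum]

theorem NabP (hUo : IsOpen U) (hg : IsMetricOn g U) (hgeo₁ : GeodCompatOn g L₁ U)
    (hgeo₂ : GeodCompatOn g L₂ U) (hx : x ∈ U) (i m : Fin n) :
    Nab g (fun z => α • L₁ z + β • L₂ z) i m x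
      = α * Nab g L₁ i m x + β * Nab g L₂ i m x := by
  have dl1 : DifferentiableAt ℝ (lamup g L₁ i) x := sm_dAt (sm_lamup hUo hg hgeo₁ i) hUo hx
  have dl2 : DifferentiableAt ℝ (lamup g L₂ i) x := sm_dAt (sm_lamup hUo hg hgeo₂ i) hUo hx
  unfold Nab
  have hpd : pd (lamup g (fun z => α • L₁ z + β • L₂ z) i) m x
      = α * pd (lamup g L₁ i) m x + β * pd (lamup g L₂ i) m x := by
    have e0 : pd (lamup g (fun z => α • L₁ z + β • L₂ z) i) m x
        = pd (fun y => α * lamup g L₁ i y + β * lamup g L₂ i y) m x :=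
      pd_congr hUo hx fun y hy => lamupP hUo hgeo₁ hgeo₂ hy i
    rw [e0, pd_add (dl1.const_mul α) (dl2.const_mul β), pd_const_mul α dl1, pd_const_mul β dl2]
  rw [hpd]
  have e : ∀ s : Fin n, Christoffel g i m s x * lamup g (fun z => α • L₁ z + β • L₂ z) s x
      = α * (Christoffel g i m s x * lamup g L₁ s x)
        + β * (Christoffel g i m s x * lamup g L₂ s x) := by
    intro s
    rw [lamupP hUo hgeo₁ hgeo₂ hx s]
    ring
  rw [Finset.sum_congr rfl fun s _ => e s, Finset.sum_add_distrib,
    ← Finset.mul_sum, ← Finset.mul_sum]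
  ring

end Pencil
/-- curvature is additive on the pencil of operators geodesically
compatible with a flat metric `g`. -/
theorem stmt_1 {n : ℕ} (hn : 2 ≤ n) (U : Set (Fin n → ℝ)) (hUo : IsOpen U)
    (hUc : IsConnected U) (g L₁ L₂ : (Fin n → ℝ) → Matrix (Fin n) (Fin n) ℝ)
    (hg : IsMetricOn g U) (hflat : IsFlatOn g U)
    (hgeo₁ : GeodCompatOn g L₁ U) (hgeo₂ : GeodCompatOn g L₂ U)
    (hnd₁ : ∀ x ∈ U, (L₁ x).det ≠ 0) (hnd₂ : ∀ x ∈ U, (L₂ x).det ≠ 0)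
    (K₁ K₂ : ℝ)
    (hK₁ : HasConstCurvOn (fun x => g x * (L₁ x)⁻¹) U K₁)
    (hK₂ : HasConstCurvOn (fun x => g x * (L₂ x)⁻¹) U K₂) :
    ∀ α β : ℝ, (∀ x ∈ U, (α • L₁ x + β • L₂ x).det ≠ 0) →
      HasConstCurvOn (fun x => g x * (α • L₁ x + β • L₂ x)⁻¹) U (α * K₁ + β * K₂) := by
  intro α β hndP
  have hgeoP : GeodCompatOn g (fun z => α • L₁ z + β • L₂ z) U := geodP hUo hg hgeo₁ hgeo₂
  have hN₁ : ∀ y ∈ U, ∀ i m : Fin n, Nab g L₁ i m y = -K₁ * kron i m :=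
    fun y hy i m => nab_of_constcurv hn hUo hg hgeo₁ hnd₁ hflat hK₁ hy i m
  have hN₂ : ∀ y ∈ U, ∀ i m : Fin n, Nab g L₂ i m y = -K₂ * kron i m :=
    fun y hy i m => nab_of_constcurv hn hUo hg hgeo₂ hnd₂ hflat hK₂ hy i m
  have hNP : ∀ y ∈ U, ∀ i m : Fin n,
      Nab g (fun z => α • L₁ z + β • L₂ z) i m y = -(α * K₁ + β * K₂) * kron i m := by
    intro y hy i m
    rw [NabP hUo hg hgeo₁ hgeo₂ hy i m, hN₁ y hy i m, hN₂ y hy i m]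
    ring
  exact constcurv_of_nab hUo hg hgeoP hndP hflat hNP
end

section
/- Let g be a metric on an open set U ⊆ ℝⁿ (n ≥ 2) and let L be a smooth field of endomorphisms geodesically compatible with g and non-degenerate. Then the Christoffel symbols Γ̄^i_{jk} of the metric ḡ = gL⁻¹ are given by Γ̄^i_{jk} = Γ^i_{jk} − λ^i ḡ_{jk}, where Γ^i_{jk} are the Christoffel symbols of g, λ = ½ tr L and λ^i = g^{is} ∂_s λ. -/
open scoped BigOperators

namespace Stmt2Aux
open Matrix

open Matrix

variable {n : ℕ}

lemma pd_congr {f h : (Fin n → ℝ) → ℝ} {x : Fin n → ℝ} (hfh : f =ᶠ[nhds x] h) (k : Fin n) :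
    pd f k x = pd h k x := by
  unfold pd; rw [hfh.fderiv_eq]

lemma pd_const (c : ℝ) (k : Fin n) (x : Fin n → ℝ) : pd (fun _ => c) k x = 0 := by
  unfold pd; rw [fderiv_fun_const]; simp

lemma pd_sum_mul {ι : Type*} (u : Finset ι) (f g : ι → (Fin n → ℝ) → ℝ) (k : Fin n)
    (x : Fin n → ℝ) (hf : ∀ i ∈ u, DifferentiableAt ℝ (f i) x)
    (hg : ∀ i ∈ u, DifferentiableAt ℝ (g i) x) :
    pd (fun y => ∑ i ∈ u, f i y * g i y) k x
      = ∑ i ∈ u, (pd (f i) k x * g i x + f i x * pd (g i) k x) := by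
  unfold pd
  rw [fderiv_fun_sum (A := fun i y => f i y * g i y) (fun i hi => ((hf i hi).mul (hg i hi)))]
  rw [ContinuousLinearMap.sum_apply]
  refine Finset.sum_congr rfl fun i hi => ?_
  rw [fderiv_fun_mul (hf i hi) (hg i hi)]
  simp only [ContinuousLinearMap.add_apply, ContinuousLinearMap.smul_apply, smul_eq_mul]
  ring

lemma diffAt_det {A : (Fin n → ℝ) → Matrix (Fin n) (Fin n) ℝ} {x : Fin n → ℝ}
    (hA : ∀ i j, DifferentiableAt ℝ (fun y => A y i j) x) :
    DifferentiableAt ℝ (fun y => (A y).det) x := by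
  simp only [Matrix.det_apply']
  refine DifferentiableAt.fun_sum fun σ _ => DifferentiableAt.const_mul ?_ _
  exact (HasFDerivAt.finset_prod
    (fun i (_ : i ∈ Finset.univ) => (hA (σ i) i).hasFDerivAt)).differentiableAt

lemma diffAt_inv_entry {A : (Fin n → ℝ) → Matrix (Fin n) (Fin n) ℝ} {x : Fin n → ℝ}
    (hA : ∀ i j, DifferentiableAt ℝ (fun y => A y i j) x) (hdet : (A x).det ≠ 0)
    (i j : Fin n) : DifferentiableAt ℝ (fun y => (A y)⁻¹ i j) x := by
  have hrw : ∀ y, (A y)⁻¹ i j = ((A y).det)⁻¹ * ((A y).updateRow j (Pi.single i 1)).det := by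
    intro y
    rw [Matrix.inv_def, Matrix.smul_apply, Ring.inverse_eq_inv, Matrix.adjugate_apply]
    rfl
  simp only [hrw]
  refine DifferentiableAt.mul ((diffAt_det hA).inv hdet) (diffAt_det ?_)
  intro a b
  rcases eq_or_ne a j with rfl | hne
  · simp only [Matrix.updateRow_self]
    exact differentiableAt_const _
  · simp only [Matrix.updateRow_apply, if_neg hne]
    exact hA a b



variable {n : ℕ}

lemma sum_delta_mul (F : Fin n → ℝ) (i : Fin n) :
    ∑ c, (if i = c then (1:ℝ) else 0) * F c = F i := by
  simp [ite_mul]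

lemma hswap (A B : Matrix (Fin n) (Fin n) ℝ) (F : Fin n → ℝ) (p : Fin n) :
    ∑ s, A p s * ∑ t, B s t * F t = ∑ t, (∑ s, A p s * B s t) * F t := by
  simp only [Finset.mul_sum, Finset.sum_mul]
  rw [Finset.sum_comm]
  exact Finset.sum_congr rfl fun s _ => Finset.sum_congr rfl fun t _ => by ring

lemma hcontract {A B : Matrix (Fin n) (Fin n) ℝ} (hAB : A * B = 1) (F : Fin n → ℝ)
    (p : Fin n) : ∑ s, A p s * ((1:ℝ)/2 * ∑ t, B s t * F t) = 1/2 * F p := by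
  have h1 : ∑ s, A p s * ((1:ℝ)/2 * ∑ t, B s t * F t)
      = 1/2 * ∑ s, A p s * ∑ t, B s t * F t := by
    rw [Finset.mul_sum]; exact Finset.sum_congr rfl fun s _ => by ring
  have h3 : ∑ s, A p s * ∑ t, B s t * F t = ∑ t, (∑ s, A p s * B s t) * F t :=
    hswap A B F p
  rw [h1, h3]
  have h2 : ∀ t, ∑ s, A p s * B s t = if p = t then (1:ℝ) else 0 := by
    intro t; rw [← Matrix.mul_apply, hAB, Matrix.one_apply]
  simp only [h2, sum_delta_mul]

set_option maxHeartbeats 1000000 in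
lemma key (G M Ginv Minv : Matrix (Fin n) (Fin n) ℝ)
    (D E DMinv Dbar Γm P : Fin n → Matrix (Fin n) (Fin n) ℝ)
    (lam' : Fin n → ℝ) (Γ : Fin n → Fin n → Fin n → ℝ)
    (hGG : G * Ginv = 1) (hGG' : Ginv * G = 1)
    (hMM : M * Minv = 1) (hMM' : Minv * M = 1)
    (hGsym : Gᵀ = G) (hDsym : ∀ a p q, D a p q = D a q p)
    (hLsym : Mᵀ * G = G * M)
    (hΓm : ∀ a p q, Γm a p q = Γ p a q)
    (hP : ∀ a p q, P a p q = lam' p * G q a + lam' q * G p a)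
    (hΓ : ∀ a b c, Γ a b c = (1/2) * ∑ s, Ginv a s * (D b s c + D c s b - D s b c))
    (hcompat : ∀ a, (E a)ᵀ * G + Mᵀ * D a - (Γm a)ᵀ * (Mᵀ * G) - (Mᵀ * G) * Γm a = P a)
    (hDMinv : ∀ a, E a * Minv + M * DMinv a = 0)
    (hDbar : ∀ a, Dbar a = D a * Minv + G * DMinv a)
    (i j k : Fin n) :
    (1/2) * ∑ s, (G * Minv)⁻¹ i s * (Dbar j s k + Dbar k s j - Dbar s j k)
      = Γ i j k - (∑ s, Ginv i s * lam' s) * (G * Minv) j k := by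
  classical
  have c1 : ∀ X : Matrix (Fin n) (Fin n) ℝ, Minv * (M * X) = X := fun X => by
    rw [← mul_assoc, hMM', one_mul]
  have c2 : ∀ X : Matrix (Fin n) (Fin n) ℝ, M * (Minv * X) = X := fun X => by
    rw [← mul_assoc, hMM, one_mul]
  have c3 : ∀ X : Matrix (Fin n) (Fin n) ℝ, G * (Ginv * X) = X := fun X => by
    rw [← mul_assoc, hGG, one_mul]
  have c4 : ∀ X : Matrix (Fin n) (Fin n) ℝ, Ginv * (G * X) = X := fun X => by
    rw [← mul_assoc, hGG', one_mul]
  have hGe : ∀ p q, G p q = G q p := by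
    intro p q
    have h := congrFun (congrFun hGsym p) q
    rw [transpose_apply] at h
    exact h.symm
  have hDmat : ∀ a, (D a)ᵀ = D a := by
    intro a; ext p q; rw [transpose_apply]; exact (hDsym a p q).symm
  have hPsym : ∀ a, (P a)ᵀ = P a := by
    intro a; ext p q; rw [transpose_apply, hP, hP]; ring
  -- metric compatibility of Γ
  have hmetr : ∀ a, D a = (Γm a)ᵀ * G + G * Γm a := by
    intro a; ext p q
    rw [Matrix.add_apply, Matrix.mul_apply, Matrix.mul_apply]
    have e1 : ∑ s, G p s * Γm a s q = 1/2 * (D a p q + D q p a - D p a q) := by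
      have h0 : ∑ s, G p s * Γm a s q
          = ∑ s, G p s * ((1:ℝ)/2 * ∑ t, Ginv s t * (D a t q + D q t a - D t a q)) :=
        Finset.sum_congr rfl fun s _ => by rw [hΓm, hΓ]
      rw [h0]
      exact hcontract hGG _ p
    have e2 : ∑ s, (Γm a)ᵀ p s * G s q = 1/2 * (D a q p + D p q a - D q a p) := by
      have h0 : ∑ s, (Γm a)ᵀ p s * G s q
          = ∑ s, G q s * ((1:ℝ)/2 * ∑ t, Ginv s t * (D a t p + D p t a - D t a p)) :=
        Finset.sum_congr rfl fun s _ => by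
          rw [transpose_apply, hΓm, hΓ, hGe s q]; ring
      rw [h0]
      exact hcontract hGG _ q
    rw [e1, e2, hDsym a q p, hDsym p q a, hDsym q a p]
    ring
  -- transposed compatibility
  have hGE : ∀ a, G * E a + G * Γm a * M - G * (M * Γm a) = P a := by
    intro a
    have h := congrArg Matrix.transpose (hcompat a)
    simp only [transpose_sub, transpose_add, transpose_mul, transpose_transpose,
      hGsym, hDmat a, hPsym a] at h
    rw [hmetr a] at h
    rw [← h]
    noncomm_ring
  have hstep : Mᵀ * (G * Minv) = G := by
    rw [← mul_assoc, hLsym, mul_assoc, hMM, mul_one]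
  have hMinvtG : Minvᵀ * G = G * Minv := by
    calc Minvᵀ * G = Minvᵀ * (Mᵀ * (G * Minv)) := by rw [hstep]
      _ = (M * Minv)ᵀ * (G * Minv) := by rw [transpose_mul, mul_assoc]
      _ = G * Minv := by rw [hMM, transpose_one, one_mul]
  have hMt : Minvᵀ = G * (Minv * Ginv) := by
    calc Minvᵀ = Minvᵀ * (G * Ginv) := by rw [hGG, mul_one]
      _ = (Minvᵀ * G) * Ginv := by rw [mul_assoc]
      _ = G * (Minv * Ginv) := by rw [hMinvtG, mul_assoc]
  have hDMinv' : ∀ a, DMinv a = -(Minv * (E a * Minv)) := by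
    intro a
    have h2 : M * DMinv a = -(E a * Minv) := by
      have h := hDMinv a
      rw [add_comm] at h
      exact eq_neg_of_add_eq_zero_left h
    calc DMinv a = Minv * (M * DMinv a) := (c1 _).symm
      _ = -(Minv * (E a * Minv)) := by rw [h2, mul_neg]
  have hEa : ∀ a, E a = Ginv * P a - Γm a * M + M * Γm a := by
    intro a
    have h : G * E a = P a - G * Γm a * M + G * (M * Γm a) := by
      rw [← hGE a]; abel
    calc E a = Ginv * (G * E a) := (c4 _).symm
      _ = Ginv * (P a - G * Γm a * M + G * (M * Γm a)) := by rw [h]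
      _ = Ginv * P a - Γm a * M + M * Γm a := by
          simp only [mul_sub, mul_add, mul_assoc, c4]
  -- covariant derivative of gbar
  have hgbarDbar : ∀ a, Dbar a
      = (Γm a)ᵀ * (G * Minv) + (G * Minv) * Γm a - Minvᵀ * (P a * Minv) := by
    intro a
    rw [hDbar a, hDMinv' a, hEa a, hmetr a, hMt]
    simp only [add_mul, sub_mul, mul_add, mul_sub, mul_neg, neg_mul, mul_assoc,
      hMM, hMM', hGG, hGG', mul_one, one_mul, c1, c2, c3, c4]
    abel
  -- symmetry of gbar
  have hgsymm : (G * Minv)ᵀ = G * Minv := by rw [transpose_mul, hGsym, hMinvtG]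
  have hgbe : ∀ p q, (G * Minv) p q = (G * Minv) q p := by
    intro p q
    have h := congrFun (congrFun hgsymm p) q
    rw [transpose_apply] at h
    exact h.symm
  have hgb_alt : ∀ p q, (G * Minv) p q = ∑ c, Minv c p * G c q := by
    intro p q
    rw [← hMinvtG, Matrix.mul_apply]
    exact Finset.sum_congr rfl fun c _ => by rw [transpose_apply]
  -- entries of Q = Minvᵀ * P a * Minv
  have hQe : ∀ a p q, (Minvᵀ * (P a * Minv)) p q
      = (∑ c, Minv c p * lam' c) * (G * Minv) q a
        + (G * Minv) p a * ∑ c, Minv c q * lam' c := by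
    intro a p q
    rw [Matrix.mul_apply]
    have e1 : ∀ b, Minvᵀ p b * (P a * Minv) b q
        = Minv b p * lam' b * (∑ c, Minv c q * G c a)
          + Minv b p * G b a * (∑ c, Minv c q * lam' c) := by
      intro b
      rw [transpose_apply, Matrix.mul_apply]
      have e2 : ∑ c, P a b c * Minv c q
          = lam' b * (∑ c, Minv c q * G c a) + (∑ c, Minv c q * lam' c) * G b a := by
        simp only [hP]
        rw [Finset.mul_sum, Finset.sum_mul, ← Finset.sum_add_distrib]
        exact Finset.sum_congr rfl fun c _ => by ring
      rw [e2]; ring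
    rw [Finset.sum_congr rfl fun b _ => e1 b]
    rw [Finset.sum_add_distrib, ← Finset.sum_mul, ← Finset.sum_mul,
      hgb_alt q a, hgb_alt p a]
  -- symmetry of Γ in last two indices
  have hΓsym : ∀ c a b, Γ c a b = Γ c b a := by
    intro c a b
    rw [hΓ, hΓ]
    refine congrArg _ (Finset.sum_congr rfl fun s _ => ?_)
    rw [hDsym s a b]; ring
  -- entrywise formula for Dbar
  have hDbar_e : ∀ a s t, Dbar a s t
      = (∑ c, Γ c a s * (G * Minv) c t) + (∑ c, (G * Minv) s c * Γ c a t)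
        - ((∑ c, Minv c s * lam' c) * (G * Minv) t a
            + (G * Minv) s a * ∑ c, Minv c t * lam' c) := by
    intro a s t
    rw [hgbarDbar a, Matrix.sub_apply, Matrix.add_apply, Matrix.mul_apply,
      Matrix.mul_apply, hQe a s t]
    congr 1
    congr 1
    · exact Finset.sum_congr rfl fun c _ => by rw [transpose_apply, hΓm]
    · exact Finset.sum_congr rfl fun c _ => by rw [hΓm]
  -- inverse of gbar
  have hinv : (G * Minv)⁻¹ = M * Ginv := by
    apply Matrix.inv_eq_right_inv
    calc G * Minv * (M * Ginv) = G * (Minv * (M * Ginv)) := by rw [mul_assoc]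
      _ = G * Ginv := by rw [c1]
      _ = 1 := hGG
  have hgbgbar : (M * Ginv) * (G * Minv) = 1 := by
    calc M * Ginv * (G * Minv) = M * (Ginv * (G * Minv)) := by rw [mul_assoc]
      _ = M * Minv := by rw [c4]
      _ = 1 := hMM
  have hgbMt : (M * Ginv) * Minvᵀ = Ginv := by
    rw [hMt]
    calc M * Ginv * (G * (Minv * Ginv)) = M * (Ginv * (G * (Minv * Ginv))) := by
          rw [mul_assoc]
      _ = M * (Minv * Ginv) := by rw [c4]
      _ = Ginv := by rw [← mul_assoc, hMM, one_mul]
  -- the combination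
  have hT : ∀ s, Dbar j s k + Dbar k s j - Dbar s j k
      = 2 * (∑ c, (G * Minv) s c * Γ c j k)
        - 2 * ((∑ c, Minv c s * lam' c) * (G * Minv) j k) := by
    intro s
    rw [hDbar_e j s k, hDbar_e k s j, hDbar_e s j k]
    have e1 : ∑ c, Γ c j s * (G * Minv) c k = ∑ c, Γ c s j * (G * Minv) c k :=
      Finset.sum_congr rfl fun c _ => by rw [hΓsym c j s]
    have e2 : ∑ c, Γ c k s * (G * Minv) c j = ∑ c, (G * Minv) j c * Γ c s k :=
      Finset.sum_congr rfl fun c _ => by rw [hΓsym c k s, hgbe c j]; ring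
    have e3 : ∑ c, (G * Minv) s c * Γ c k j = ∑ c, (G * Minv) s c * Γ c j k :=
      Finset.sum_congr rfl fun c _ => by rw [hΓsym c k j]
    rw [e1, e2, e3, hgbe k j, hgbe s j, hgbe s k]
    ring
  rw [hinv]
  have hL2 : (1/2 : ℝ) * ∑ s, (M * Ginv) i s * (Dbar j s k + Dbar k s j - Dbar s j k)
      = (∑ s, (M * Ginv) i s * ∑ c, (G * Minv) s c * Γ c j k)
        - ∑ s, (M * Ginv) i s * ((∑ c, Minv c s * lam' c) * (G * Minv) j k) := by
    rw [Finset.sum_congr rfl fun s _ => by rw [hT s]]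
    rw [Finset.mul_sum, ← Finset.sum_sub_distrib]
    exact Finset.sum_congr rfl fun s _ => by ring
  rw [hL2]
  have hfirst : ∑ s, (M * Ginv) i s * ∑ c, (G * Minv) s c * Γ c j k = Γ i j k := by
    have h1 : ∑ s, (M * Ginv) i s * ∑ c, (G * Minv) s c * Γ c j k
        = ∑ t, (∑ s, (M * Ginv) i s * (G * Minv) s t) * Γ t j k :=
      hswap (M * Ginv) (G * Minv) (fun c => Γ c j k) i
    rw [h1]
    have h2 : ∀ t, ∑ s, (M * Ginv) i s * (G * Minv) s t = if i = t then (1:ℝ) else 0 :=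
      fun t => by rw [← Matrix.mul_apply, hgbgbar, Matrix.one_apply]
    simp only [h2]
    exact sum_delta_mul (fun t => Γ t j k) i
  have hsecond : ∑ s, (M * Ginv) i s * ((∑ c, Minv c s * lam' c) * (G * Minv) j k)
      = (∑ s, Ginv i s * lam' s) * (G * Minv) j k := by
    have e : ∀ s, (M * Ginv) i s * ((∑ c, Minv c s * lam' c) * (G * Minv) j k)
        = ((M * Ginv) i s * ∑ c, Minvᵀ s c * lam' c) * (G * Minv) j k := by
      intro s
      have e0 : ∑ c, Minv c s * lam' c = ∑ c, Minvᵀ s c * lam' c :=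
        Finset.sum_congr rfl fun c _ => by rw [transpose_apply]
      rw [e0]; ring
    rw [Finset.sum_congr rfl fun s _ => e s, ← Finset.sum_mul]
    congr 1
    have h1 : ∑ s, (M * Ginv) i s * ∑ c, Minvᵀ s c * lam' c
        = ∑ t, (∑ s, (M * Ginv) i s * Minvᵀ s t) * lam' t :=
      hswap (M * Ginv) Minvᵀ lam' i
    rw [h1]
    have h3 : ∀ t, ∑ s, (M * Ginv) i s * Minvᵀ s t = Ginv i t := fun t => by
      rw [← Matrix.mul_apply, hgbMt]
    simp only [h3]
  rw [hfirst, hsecond]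


end Stmt2Aux

set_option maxHeartbeats 1000000
open Matrix

/-- the Christoffel symbols of `ḡ = gL⁻¹` are
`Γ̄^i_{jk} = Γ^i_{jk} − λ^i ḡ_{jk}`. -/
theorem stmt_2 {n : ℕ} (hn : 2 ≤ n) (U : Set (Fin n → ℝ)) (hUo : IsOpen U)
    (g L : (Fin n → ℝ) → Matrix (Fin n) (Fin n) ℝ)
    (hg : IsMetricOn g U)
    (hgeo : GeodCompatOn g L U)
    (hnd : ∀ x ∈ U, (L x).det ≠ 0) :
    ∀ x ∈ U, ∀ i j k : Fin n,
      Christoffel (fun y => g y * (L y)⁻¹) i j k x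
        = Christoffel g i j k x
          - (∑ s, (g x)⁻¹ i s * pd (lamL L) s x) * (g x * (L x)⁻¹) j k := by
  classical
  obtain ⟨hgsm, hgsymU, hgdet⟩ := hg
  obtain ⟨hLsm, hlowsym, hcov⟩ := hgeo
  intro x hx i j k
  have hUmem : U ∈ nhds x := hUo.mem_nhds hx
  have hgd : ∀ p q, DifferentiableAt ℝ (fun y => g y p q) x := fun p q =>
    ((hgsm p q).contDiffAt hUmem).differentiableAt (by simp)
  have hLd : ∀ p q, DifferentiableAt ℝ (fun y => L y p q) x := fun p q =>
    ((hLsm p q).contDiffAt hUmem).differentiableAt (by simp)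
  have hLinvd : ∀ p q, DifferentiableAt ℝ (fun y => (L y)⁻¹ p q) x :=
    Stmt2Aux.diffAt_inv_entry hLd (hnd x hx)
  have hGu : IsUnit (g x).det := isUnit_iff_ne_zero.mpr (hgdet x hx)
  have hMu : IsUnit (L x).det := isUnit_iff_ne_zero.mpr (hnd x hx)
  have hGG : g x * (g x)⁻¹ = 1 := Matrix.mul_nonsing_inv _ hGu
  have hGG' : (g x)⁻¹ * g x = 1 := Matrix.nonsing_inv_mul _ hGu
  have hMM : L x * (L x)⁻¹ = 1 := Matrix.mul_nonsing_inv _ hMu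
  have hMM' : (L x)⁻¹ * L x = 1 := Matrix.nonsing_inv_mul _ hMu
  have hGsym : (g x)ᵀ = g x := hgsymU x hx
  have hGe : ∀ p q, g x p q = g x q p := fun p q => ((hgsymU x hx).apply p q).symm
  have hDsym : ∀ (a p q : Fin n),
      pd (fun y => g y p q) a x = pd (fun y => g y q p) a x := by
    intro a p q
    refine Stmt2Aux.pd_congr (Filter.eventuallyEq_of_mem hUmem fun y hy => ?_) a
    exact ((hgsymU y hy).apply p q).symm
  have hLsym : (L x)ᵀ * g x = g x * L x := by
    ext p q
    have h1 := hlowsym x hx p q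
    simp only [lowL] at h1
    simp only [Matrix.mul_apply, Matrix.transpose_apply]
    rw [h1]
    exact Finset.sum_congr rfl fun s _ => by rw [hGe s p]; ring
  -- matrix-valued derivative data
  have hcompat : ∀ a : Fin n,
      (Matrix.of fun p q => pd (fun y => L y p q) a x)ᵀ * g x
        + (L x)ᵀ * (Matrix.of fun p q => pd (fun y => g y p q) a x)
        - (Matrix.of fun p q => Christoffel g p a q x)ᵀ * ((L x)ᵀ * g x)
        - ((L x)ᵀ * g x) * (Matrix.of fun p q => Christoffel g p a q x)
      = Matrix.of fun p q =>
          pd (lamL L) p x * g x q a + pd (lamL L) q x * g x p a := by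
    intro a
    ext p q
    have hc := hcov x hx a p q
    simp only [covL, lowL] at hc
    have hplow : pd (fun y => ∑ s, L y s p * g y s q) a x
        = ∑ s, (pd (fun y => L y s p) a x * g x s q
            + L x s p * pd (fun y => g y s q) a x) :=
      Stmt2Aux.pd_sum_mul Finset.univ (fun s y => L y s p) (fun s y => g y s q) a x
        (fun s _ => hLd s p) (fun s _ => hgd s q)
    rw [hplow] at hc
    simp only [Matrix.sub_apply, Matrix.add_apply, Matrix.mul_apply,
      Matrix.transpose_apply, Matrix.of_apply]
    rw [← Finset.sum_add_distrib]
    have hcomm : (∑ s, (∑ c, L x c p * g x c s) * Christoffel g s a q x)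
        = ∑ s, Christoffel g s a q x * ∑ c, L x c p * g x c s :=
      Finset.sum_congr rfl fun s _ => mul_comm _ _
    rw [hcomm]
    exact hc
  have hDMinv : ∀ a : Fin n,
      (Matrix.of fun p q => pd (fun y => L y p q) a x) * (L x)⁻¹
        + L x * (Matrix.of fun p q => pd (fun y => (L y)⁻¹ p q) a x) = 0 := by
    intro a
    ext p q
    have hones : (fun y => ∑ s, L y p s * (L y)⁻¹ s q)
        =ᶠ[nhds x] (fun _ => if p = q then (1:ℝ) else 0) := by
      refine Filter.eventuallyEq_of_mem hUmem fun y hy => ?_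
      have h1 : L y * (L y)⁻¹ = 1 :=
        Matrix.mul_nonsing_inv _ (isUnit_iff_ne_zero.mpr (hnd y hy))
      have h2 := congrFun (congrFun h1 p) q
      rw [Matrix.mul_apply] at h2
      rw [h2, Matrix.one_apply]
    have h3 : pd (fun y => ∑ s, L y p s * (L y)⁻¹ s q) a x = 0 := by
      rw [Stmt2Aux.pd_congr hones a]
      exact Stmt2Aux.pd_const _ a x
    have h4 := Stmt2Aux.pd_sum_mul Finset.univ (fun s y => L y p s)
      (fun s y => (L y)⁻¹ s q) a x (fun s _ => hLd p s) (fun s _ => hLinvd s q)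
    simp only [Matrix.add_apply, Matrix.mul_apply, Matrix.zero_apply, Matrix.of_apply]
    rw [← Finset.sum_add_distrib]
    exact h4.symm.trans h3
  have hDbar : ∀ a : Fin n,
      (Matrix.of fun p q => pd (fun y => (g y * (L y)⁻¹) p q) a x)
        = (Matrix.of fun p q => pd (fun y => g y p q) a x) * (L x)⁻¹
          + g x * (Matrix.of fun p q => pd (fun y => (L y)⁻¹ p q) a x) := by
    intro a
    ext p q
    simp only [Matrix.add_apply, Matrix.mul_apply, Matrix.of_apply]
    have h4 := Stmt2Aux.pd_sum_mul Finset.univ (fun s y => g y p s)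
      (fun s y => (L y)⁻¹ s q) a x (fun s _ => hgd p s) (fun s _ => hLinvd s q)
    rw [← Finset.sum_add_distrib]
    exact h4
  have main := Stmt2Aux.key (g x) (L x) (g x)⁻¹ (L x)⁻¹
    (fun a => Matrix.of fun p q => pd (fun y => g y p q) a x)
    (fun a => Matrix.of fun p q => pd (fun y => L y p q) a x)
    (fun a => Matrix.of fun p q => pd (fun y => (L y)⁻¹ p q) a x)
    (fun a => Matrix.of fun p q => pd (fun y => (g y * (L y)⁻¹) p q) a x)
    (fun a => Matrix.of fun p q => Christoffel g p a q x)
    (fun a => Matrix.of fun p q =>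
      pd (lamL L) p x * g x q a + pd (lamL L) q x * g x p a)
    (fun s => pd (lamL L) s x)
    (fun a b c => Christoffel g a b c x)
    hGG hGG' hMM hMM' hGsym hDsym hLsym
    (fun a p q => rfl) (fun a p q => rfl) (fun a b c => rfl)
    hcompat hDMinv hDbar i j k
  exact main
end
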